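/- arXiv:1404.7403 — 6 statements merged into one kernel-verified Lean document; each statement's English description precedes it below -/
import Mathlib

section
/- Under the stated two-dimensional setup, suppose the selection rule S_2 always selects at least one index (Pr(S_2 ≠ ∅) = 1). Then the FCR of the level-(q_1, q_2) FCR-adjusted procedure satisfies FCR = q_1 + (1 − q_1) · FCR_2, where FCR_2 = E[V_2 / max(|S_2|, 1)] with V_2 = #{i ∈ S_2 : θ_{i2} ∉ CI_{i2}(R_min(Y_{•2}^{(i)}) · q_2 / m)} is the FCR of the level-q_2 BY FCR-adjusted confidence intervals for the second coordinates under selection rule S_2. -/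
/-!
STATEMENT 2: In the two-dimensional setup, if the selection rule S₂ almost surely
selects at least one index, the FCR of the level-(q₁, q₂) FCR-adjusted procedure
satisfies FCR = q₁ + (1 − q₁) · FCR₂, where FCR₂ is the FCR of the level-q₂ BY
FCR-adjusted confidence intervals for the second coordinates.
-/

open MeasureTheory ProbabilityTheory Real Set

/-- `R_min(Y_{•2}^{(i)})`: the minimum over `t` of the number of selected indices of
`S₂` applied to the data with `Y_{i2}` replaced by `t`, among those `t` for which `i`
is selected.  (It depends on the data only through the coordinates other than `i`.) -/
noncomputable def Rmin (m : ℕ) (S2 : (Fin m → ℝ) → Finset (Fin m)) (i : Fin m)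
    (v : Fin m → ℝ) : ℕ :=
  sInf {r : ℕ | ∃ t : ℝ, i ∈ S2 (Function.update v i t) ∧
    (S2 (Function.update v i t)).card = r}

open Classical in
/-- The false coverage proportion of the level-(q₁, q₂) FCR-adjusted procedure:
the proportion of selected indices `i` whose rectangular confidence set
`C̃I_i = CI_{i1}(q₁) × CI_{i2}(R_min · q₂ / m)` fails to cover `(θ_{i1}, θ_{i2})`. -/
noncomputable def fcp2d (m : ℕ) (q1 q2 : ℝ) (θ1 θ2 : Fin m → ℝ)
    (CI1 CI2 : Fin m → ℝ → ℝ → Set ℝ) (S2 : (Fin m → ℝ) → Finset (Fin m))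
    (v1 v2 : Fin m → ℝ) : ℝ :=
  (((S2 v2).filter fun i =>
      ¬ (θ1 i ∈ CI1 i (v1 i) q1 ∧
        θ2 i ∈ CI2 i (v2 i) (Rmin m S2 i v2 * q2 / m))).card : ℝ) /
    max ((S2 v2).card : ℝ) 1

open Classical in
/-- The false coverage proportion of the level-q₂ BY FCR-adjusted confidence intervals
for the second coordinates: the proportion of selected indices `i` with
`θ_{i2} ∉ CI_{i2}(R_min · q₂ / m)`. -/
noncomputable def fcp2 (m : ℕ) (q2 : ℝ) (θ2 : Fin m → ℝ)
    (CI2 : Fin m → ℝ → ℝ → Set ℝ) (S2 : (Fin m → ℝ) → Finset (Fin m))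
    (v2 : Fin m → ℝ) : ℝ :=
  (((S2 v2).filter fun i =>
      θ2 i ∉ CI2 i (v2 i) (Rmin m S2 i v2 * q2 / m)).card : ℝ) /
    max ((S2 v2).card : ℝ) 1

/-!
The rectangle misses `θ_i` iff `CI_{i1}` misses `θ_{i1}`, or `CI_{i1}` covers `θ_{i1}` and the
adjusted `CI_{i2}` misses `θ_{i2}`. Hence the false coverage proportion is a sum over `i` of these
two events weighted by `1{i ∈ S₂} / max(|S₂|, 1)`. Everything except the first-coordinate event is
a function of `Y_{•2}`, which is independent of `Y_{i1}`, so each expectation factorises: the first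
event contributes `q₁ · E[weight]`, the second `(1 - q₁) · E[weight · 1{θ_{i2} missed}]`. As `S₂ ≠ ∅`
almost surely the weights sum to one, leaving `q₁ + (1 - q₁) · FCR₂`.
-/

open Finset

lemma measurableSet_setOf_apply_of_measurable {β γ : Type*} [MeasurableSpace β]
    [MeasurableSpace γ] [Countable γ] [MeasurableSingletonClass γ] {r : β → γ}
    (hr : Measurable r) {p : γ → β → Prop} (hp : ∀ n, MeasurableSet {x | p n x}) :
    MeasurableSet {x | p (r x) x} := by
  have : Measurable fun q : γ × β => p q.1 q.2 :=
    measurable_from_prod_countable_right fun n => measurableSet_setOfPred.1 (hp n)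
  exact measurableSet_setOfPred.2 (this.comp (hr.prodMk measurable_id))

lemma measurableSet_setOf_ne_empty {β : Type*} [MeasurableSpace β] {ι : Type*} [Countable ι]
    {S : β → Finset ι} (hS : ∀ i, MeasurableSet {x | i ∈ S x}) :
    MeasurableSet {x | S x ≠ ∅} := by
  have : {x | S x ≠ ∅} = ⋃ i, {x | i ∈ S x} := by
    ext x; simp [Finset.eq_empty_iff_forall_notMem]
  exact this ▸ .iUnion hS

section SelectionWeight

variable {ι : Type*} [DecidableEq ι]

noncomputable def selectionWeight (s : Finset ι) (i : ι) : ℝ :=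
  if i ∈ s then (max (#s : ℝ) 1)⁻¹ else 0

lemma selectionWeight_nonneg (s : Finset ι) (i : ι) : 0 ≤ selectionWeight s i := by
  unfold selectionWeight; split_ifs <;> positivity

lemma selectionWeight_le_one (s : Finset ι) (i : ι) : selectionWeight s i ≤ 1 := by
  unfold selectionWeight; split_ifs
  · exact inv_le_one_of_one_le₀ (le_max_right _ _)
  · exact zero_le_one

lemma card_filter_div_eq_sum_selectionWeight [Fintype ι] (s : Finset ι) (p : ι → Prop)
    [DecidablePred p] :
    (#(s.filter p) : ℝ) / max (#s : ℝ) 1 = ∑ i, if p i then selectionWeight s i else 0 := by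
  have : univ.filter (fun i => p i ∧ i ∈ s) = s.filter p := by ext; simp [and_comm]
  simp [selectionWeight, ← ite_and, Finset.sum_ite, div_eq_mul_inv, this]

lemma sum_selectionWeight [Fintype ι] {s : Finset ι} (hs : s.Nonempty) :
    ∑ i, selectionWeight s i = 1 := by
  have : (1 : ℝ) ≤ #s := by exact_mod_cast hs.card_pos
  simp [selectionWeight, max_eq_left this, mul_inv_cancel₀ (by positivity : (#s : ℝ) ≠ 0)]

lemma measurable_selectionWeight {β : Type*} [MeasurableSpace β] [Fintype ι]
    {S : β → Finset ι} (hS : ∀ i, MeasurableSet {x | i ∈ S x}) (i : ι) :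
    Measurable fun x => selectionWeight (S x) i := by
  have hcard : Measurable fun x => (#(S x) : ℝ) := by
    have hsum : ∀ x, (#(S x) : ℝ) = ∑ j, if j ∈ S x then 1 else 0 := by
      intro x; simp
    simp only [hsum]
    exact Finset.measurable_sum _ fun j _ => Measurable.ite (hS j) measurable_const measurable_const
  exact Measurable.ite (hS i) (hcard.max measurable_const).inv measurable_const

variable {Ω : Type*} [MeasurableSpace Ω] {μ : Measure Ω} [Fintype ι] {S : Ω → Finset ι}

lemma integrable_selectionWeight [IsFiniteMeasure μ] (hS : ∀ i, MeasurableSet {ω | i ∈ S ω})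
    (i : ι) : Integrable (fun ω => selectionWeight (S ω) i) μ :=
  .of_bound (measurable_selectionWeight hS i).aestronglyMeasurable 1 <| ae_of_all _ fun _ => by
    rw [Real.norm_of_nonneg (selectionWeight_nonneg _ _)]; exact selectionWeight_le_one _ _

lemma integral_sum_selectionWeight [IsProbabilityMeasure μ] (hS : ∀ᵐ ω ∂μ, (S ω).Nonempty) :
    ∫ ω, ∑ i, selectionWeight (S ω) i ∂μ = 1 := by
  rw [integral_congr_ae (hS.mono fun ω h => sum_selectionWeight h)]
  simp

end SelectionWeight

namespace ProbabilityTheory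

variable {Ω : Type*} [MeasurableSpace Ω] {μ : Measure Ω}

lemma iIndepFun.indepFun_sumElim_inl {ι κ β : Type*} [Fintype κ] [MeasurableSpace β]
    {f : ι → Ω → β} {g : κ → Ω → β} (h : iIndepFun (Sum.elim f g) μ)
    (hf : ∀ i, Measurable (f i)) (hg : ∀ j, Measurable (g j)) (i : ι) :
    IndepFun (f i) (fun ω j => g j ω) μ := by
  have hdisj : Disjoint {Sum.inl i} (univ.map .inr : Finset (ι ⊕ κ)) := by simp
  exact (h.indepFun_finset _ _ hdisj (Sum.forall.2 ⟨hf, hg⟩)).comp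
    (measurable_pi_apply ⟨Sum.inl i, mem_singleton_self _⟩)
    (measurable_pi_lambda _ fun j => measurable_pi_apply ⟨Sum.inr j, by simp⟩)

lemma integral_indicator_mul_of_indepFun [IsProbabilityMeasure μ] {α β : Type*}
    [MeasurableSpace α] [MeasurableSpace β] {X : Ω → α} {Z : Ω → β} (hXZ : IndepFun X Z μ)
    (hX : Measurable X) (hZ : Measurable Z) {A : Set α} (hA : MeasurableSet A) {g : β → ℝ}
    (hg : Measurable g) :
    ∫ ω, A.indicator 1 (X ω) * g (Z ω) ∂μ = μ.real (X ⁻¹' A) * ∫ ω, g (Z ω) ∂μ := by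
  have hind : Measurable (A.indicator (1 : α → ℝ)) := measurable_const.indicator hA
  calc ∫ ω, A.indicator 1 (X ω) * g (Z ω) ∂μ
      = (∫ ω, A.indicator 1 (X ω) ∂μ) * ∫ ω, g (Z ω) ∂μ :=
        (hXZ.comp hind hg).integral_fun_mul_eq_mul_integral
          (hind.comp hX).aestronglyMeasurable (hg.comp hZ).aestronglyMeasurable
    _ = μ.real (X ⁻¹' A) * ∫ ω, g (Z ω) ∂μ := by
        rw [← integral_indicator_one (hX hA)]; rfl

open Classical in
lemma integral_ite_not_and_of_indepFun [IsProbabilityMeasure μ] {α β : Type*}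
    [MeasurableSpace α] [MeasurableSpace β] {X : Ω → α} {Z : Ω → β} (hXZ : IndepFun X Z μ)
    (hX : Measurable X) (hZ : Measurable Z) {A : Set α} {B : Set β} (hA : MeasurableSet A)
    (hB : MeasurableSet B) {f : β → ℝ} (hf : Measurable f)
    (hfZ : Integrable (fun ω => f (Z ω)) μ) :
    ∫ ω, (if ¬(X ω ∈ A ∧ Z ω ∈ B) then f (Z ω) else 0) ∂μ
      = (1 - μ.real (X ⁻¹' A)) * ∫ ω, f (Z ω) ∂μ
        + μ.real (X ⁻¹' A) * ∫ ω, (if Z ω ∉ B then f (Z ω) else 0) ∂μ := by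
  set g : β → ℝ := fun z => if z ∉ B then f z else 0
  have hg : Measurable g := Measurable.ite hB.compl hf measurable_const
  have hgZ : Integrable (fun ω => g (Z ω)) μ :=
    hfZ.mono (hg.comp hZ).aestronglyMeasurable <| ae_of_all _ fun ω => by
      simp only [g]; split_ifs <;> simp
  have hsplit : ∀ ω, (if ¬(X ω ∈ A ∧ Z ω ∈ B) then f (Z ω) else 0)
      = Aᶜ.indicator 1 (X ω) * f (Z ω) + A.indicator 1 (X ω) * g (Z ω) := by
    intro ω
    by_cases hXA : X ω ∈ A <;> by_cases hZB : Z ω ∈ B <;> simp [g, hXA, hZB]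
  have hind : ∀ C : Set α, MeasurableSet C →
      AEStronglyMeasurable (fun ω => C.indicator (1 : α → ℝ) (X ω)) μ := fun C hC =>
    ((measurable_const.indicator hC).comp hX).aestronglyMeasurable
  have hbdd : ∀ C : Set α, ∀ᵐ ω ∂μ, ‖C.indicator (1 : α → ℝ) (X ω)‖ ≤ 1 := fun C =>
    ae_of_all _ fun ω => (norm_indicator_le_norm_self 1 (X ω)).trans (by simp)
  simp only [hsplit]
  rw [integral_add (hfZ.bdd_mul (hind _ hA.compl) (hbdd _)) (hgZ.bdd_mul (hind _ hA) (hbdd _)),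
    integral_indicator_mul_of_indepFun hXZ hX hZ hA.compl hf,
    integral_indicator_mul_of_indepFun hXZ hX hZ hA hg, Set.preimage_compl,
    probReal_compl_eq_one_sub (hX hA)]

open Classical in
lemma integral_sum_ite_not_and_of_indepFun [IsProbabilityMeasure μ] {ι α β : Type*} [Fintype ι]
    [MeasurableSpace α] [MeasurableSpace β] {X : ι → Ω → α} {Z : Ω → β}
    (hXZ : ∀ i, IndepFun (X i) Z μ) (hX : ∀ i, Measurable (X i)) (hZ : Measurable Z)
    {A : ι → Set α} {B : ι → Set β} (hA : ∀ i, MeasurableSet (A i))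
    (hB : ∀ i, MeasurableSet (B i)) {f : ι → β → ℝ} (hf : ∀ i, Measurable (f i))
    (hfZ : ∀ i, Integrable (fun ω => f i (Z ω)) μ) {p : ℝ}
    (hp : ∀ i, μ.real (X i ⁻¹' A i) = p) :
    ∫ ω, ∑ i, (if ¬(X i ω ∈ A i ∧ Z ω ∈ B i) then f i (Z ω) else 0) ∂μ
      = (1 - p) * ∫ ω, ∑ i, f i (Z ω) ∂μ
        + p * ∫ ω, ∑ i, (if Z ω ∉ B i then f i (Z ω) else 0) ∂μ := by
  have hint : ∀ i (P : Ω → Prop) [DecidablePred P], MeasurableSet {ω | P ω} →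
      Integrable (fun ω => if P ω then f i (Z ω) else 0) μ := fun i P _ hP =>
    ((hfZ i).indicator hP).congr (ae_of_all _ fun ω => by simp [Set.indicator_apply])
  rw [integral_finsetSum _ fun i _ => hint i (fun ω => ¬(X i ω ∈ A i ∧ Z ω ∈ B i))
      ((hX i (hA i)).inter (hZ (hB i))).compl,
    integral_finsetSum _ fun i _ => hfZ i,
    integral_finsetSum _ fun i _ => hint i (fun ω => Z ω ∉ B i) (hZ (hB i)).compl,
    Finset.mul_sum, Finset.mul_sum, ← Finset.sum_add_distrib]
  refine Finset.sum_congr rfl fun i _ => ?_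
  rw [integral_ite_not_and_of_indepFun (hXZ i) (hX i) hZ (hA i) (hB i) (hf i) (hfZ i), hp i]

end ProbabilityTheory

theorem two_dim_fcr_identity_general
    {Ω : Type*} [MeasurableSpace Ω] (P : Measure Ω) [IsProbabilityMeasure P]
    (m : ℕ) (q1 q2 : ℝ)
    (hq1 : q1 ∈ Set.Icc (0:ℝ) 1)
    (θ1 θ2 : Fin m → ℝ)
    -- the 2m random variables Y_{11}, Y_{12}, ..., Y_{m1}, Y_{m2}
    (Y1 Y2 : Fin m → Ω → ℝ)
    (hY1_meas : ∀ i, Measurable (Y1 i)) (hY2_meas : ∀ i, Measurable (Y2 i))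
    -- mutual independence of all 2m variables
    (hindep : iIndepFun
      (Sum.elim Y1 Y2) P)
    -- confidence sets: CI_{i1}(α) depends only on Y_{i1}, with exact coverage 1 − α;
    -- CI_{i2}(α) depends only on Y_{i2}, with coverage at least 1 − α
    (CI1 CI2 : Fin m → ℝ → ℝ → Set ℝ)
    (hCI1_meas : ∀ i, ∀ α t : ℝ, MeasurableSet {x : ℝ | t ∈ CI1 i x α})
    (hCI2_meas : ∀ i, ∀ α t : ℝ, MeasurableSet {x : ℝ | t ∈ CI2 i x α})
    (hCI1_cov : ∀ i, ∀ α ∈ Set.Icc (0:ℝ) 1,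
      P {ω | θ1 i ∈ CI1 i (Y1 i ω) α} = ENNReal.ofReal (1 - α))
    -- measurable selection rule based only on Y_{•2}
    (S2 : (Fin m → ℝ) → Finset (Fin m))
    (hS2_meas : ∀ i, MeasurableSet {v : Fin m → ℝ | i ∈ S2 v})
    (hRmin_meas : ∀ i, Measurable fun v : Fin m → ℝ => Rmin m S2 i v)
    -- S₂ always selects at least one index
    (hS2_ne : P {ω | S2 (fun j => Y2 j ω) ≠ ∅} = 1) :
    -- FCR of the two-dimensional procedure = q₁ + (1 − q₁) · FCR₂
    ∫ ω, fcp2d m q1 q2 θ1 θ2 CI1 CI2 S2 (fun j => Y1 j ω) (fun j => Y2 j ω) ∂P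
      = q1 + (1 - q1) * ∫ ω, fcp2 m q2 θ2 CI2 S2 (fun j => Y2 j ω) ∂P := by
  have hY2 : Measurable fun ω (j : Fin m) => Y2 j ω := measurable_pi_lambda _ hY2_meas
  have hB : ∀ i, MeasurableSet {v : Fin m → ℝ | θ2 i ∈ CI2 i (v i) (Rmin m S2 i v * q2 / m)} :=
    fun i => measurableSet_setOf_apply_of_measurable (hRmin_meas i)
      (p := fun n v => θ2 i ∈ CI2 i (v i) (n * q2 / m))
      fun n => (hCI2_meas i _ (θ2 i)).preimage (measurable_pi_apply i)
  have hcov : ∀ i, P.real (Y1 i ⁻¹' {x | θ1 i ∈ CI1 i x q1}) = 1 - q1 := fun i => by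
    rw [measureReal_def, Set.preimage_ofPred_eq, hCI1_cov i q1 hq1,
      ENNReal.toReal_ofReal (by linarith [hq1.2])]
  have hne : ∀ᵐ ω ∂P, S2 (fun j => Y2 j ω) ≠ ∅ :=
    (ae_iff_measure_eq ((measurableSet_setOf_ne_empty hS2_meas).preimage hY2).nullMeasurableSet).2
      (hS2_ne.trans measure_univ.symm)
  simp only [fcp2d, fcp2, card_filter_div_eq_sum_selectionWeight]
  refine (integral_sum_ite_not_and_of_indepFun (hindep.indepFun_sumElim_inl hY1_meas hY2_meas)
    hY1_meas hY2 (fun i => hCI1_meas i q1 (θ1 i)) hB (measurable_selectionWeight hS2_meas)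
    (integrable_selectionWeight fun i => hY2 (hS2_meas i)) hcov).trans ?_
  rw [integral_sum_selectionWeight (hne.mono fun _ => nonempty_iff_ne_empty.2), sub_sub_cancel,
    mul_one]
  rfl

theorem two_dim_fcr_identity
    {Ω : Type*} [MeasurableSpace Ω] (P : Measure Ω) [IsProbabilityMeasure P]
    (m : ℕ) (hm : 1 ≤ m) (q1 q2 : ℝ)
    (hq1 : q1 ∈ Set.Icc (0:ℝ) 1) (hq2 : q2 ∈ Set.Icc (0:ℝ) 1)
    (θ1 θ2 : Fin m → ℝ)
    -- the 2m random variables Y_{11}, Y_{12}, ..., Y_{m1}, Y_{m2}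
    (Y1 Y2 : Fin m → Ω → ℝ)
    (hY1_meas : ∀ i, Measurable (Y1 i)) (hY2_meas : ∀ i, Measurable (Y2 i))
    -- mutual independence of all 2m variables
    (hindep : iIndepFun
      (Sum.elim Y1 Y2) P)
    -- confidence sets: CI_{i1}(α) depends only on Y_{i1}, with exact coverage 1 − α;
    -- CI_{i2}(α) depends only on Y_{i2}, with coverage at least 1 − α
    (CI1 CI2 : Fin m → ℝ → ℝ → Set ℝ)
    (hCI1_meas : ∀ i, ∀ α t : ℝ, MeasurableSet {x : ℝ | t ∈ CI1 i x α})
    (hCI2_meas : ∀ i, ∀ α t : ℝ, MeasurableSet {x : ℝ | t ∈ CI2 i x α})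
    (hCI1_cov : ∀ i, ∀ α ∈ Set.Icc (0:ℝ) 1,
      P {ω | θ1 i ∈ CI1 i (Y1 i ω) α} = ENNReal.ofReal (1 - α))
    (hCI2_cov : ∀ i, ∀ α ∈ Set.Icc (0:ℝ) 1,
      ENNReal.ofReal (1 - α) ≤ P {ω | θ2 i ∈ CI2 i (Y2 i ω) α})
    -- measurable selection rule based only on Y_{•2}
    (S2 : (Fin m → ℝ) → Finset (Fin m))
    (hS2_meas : ∀ i, MeasurableSet {v : Fin m → ℝ | i ∈ S2 v})
    (hRmin_meas : ∀ i, Measurable fun v : Fin m → ℝ => Rmin m S2 i v)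
    -- S₂ always selects at least one index
    (hS2_ne : P {ω | S2 (fun j => Y2 j ω) ≠ ∅} = 1) :
    -- FCR of the two-dimensional procedure = q₁ + (1 − q₁) · FCR₂
    ∫ ω, fcp2d m q1 q2 θ1 θ2 CI1 CI2 S2 (fun j => Y1 j ω) (fun j => Y2 j ω) ∂P
      = q1 + (1 - q1) * ∫ ω, fcp2 m q2 θ2 CI2 S2 (fun j => Y2 j ω) ∂P :=
  two_dim_fcr_identity_general P m q1 q2 hq1 θ1 θ2 Y1 Y2 hY1_meas hY2_meas hindep CI1 CI2 hCI1_meas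
    hCI2_meas hCI1_cov S2 hS2_meas hRmin_meas hS2_ne
end

section
/- With the notation of the selection-rule setup: 1 ∈ S*(y) if and only if τ(ĩ*(y)) ≤ |y_1|. -/
/-!
Write `N_v(x)` for the number of entries of `v` that are at least `x`, so that
`x ≤ v_(r) ↔ r ≤ N_v(x)` for `1 ≤ r ≤ m`. If `w` is `v` with `v_j` replaced by `∞`, then
`N_w(x) = N_v(x)` when `x ≤ v_j` and `N_w(x) = N_v(x) + 1` otherwise.

Since `v ≤ w` entrywise, `i* ≤ ĩ*`, so `τ(ĩ*) ≤ τ(i*) ≤ v_(i*)`, which gives one direction.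
Conversely, if `τ(ĩ*) ≤ v_j` then the counts at `τ(ĩ*)` agree, so `ĩ*` passes the test for `v` and
`i* ≥ ĩ* ≥ 1`; and if `v_(i*)` exceeded `v_j`, the count for `w` at `v_(i*)` would be at least
`i* + 1`, so `i* + 1` would pass the test for `w` (as `τ(i* + 1) ≤ τ(i*)`), contradicting the
maximality of `ĩ*`.
-/

open Classical ENNReal

/-- The `r`-th largest entry of a vector `v ∈ [0,∞]^m` (1-indexed; junk value `0`
if `r` is out of range). -/
noncomputable def ordDesc (m : ℕ) (v : Fin m → ℝ≥0∞) (r : ℕ) : ℝ≥0∞ :=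
  ((List.ofFn v).mergeSort (fun a b => decide (b ≤ a))).getD (r - 1) 0

/-- The vector `a(y) = (|y_1|, ..., |y_m|)`, viewed in `[0,∞]`. -/
noncomputable def absVec (m : ℕ) (y : Fin m → ℝ) : Fin m → ℝ≥0∞ :=
  fun i => ENNReal.ofReal |y i|

/-- `i*(y) = max{i ∈ {1,...,m} : τ(i) ≤ a(y)_(i)}`, with value `0` if no such `i`
exists. -/
noncomputable def istar (m : ℕ) (τ : ℕ → ℝ) (y : Fin m → ℝ) : ℕ :=
  ((Finset.Icc 1 m).filter fun r =>
    ENNReal.ofReal (τ r) ≤ ordDesc m (absVec m y) r).sup id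

/-- `w(y)`: the vector `a(y)` with its first entry replaced by `+∞`. -/
noncomputable def wVec (m : ℕ) [NeZero m] (y : Fin m → ℝ) : Fin m → ℝ≥0∞ :=
  Function.update (absVec m y) 0 ⊤

/-- `ĩ*(y) = max{i ∈ {1,...,m} : τ(i) ≤ w(y)_(i)}`. -/
noncomputable def istarTilde (m : ℕ) [NeZero m] (τ : ℕ → ℝ) (y : Fin m → ℝ) : ℕ :=
  ((Finset.Icc 1 m).filter fun r =>
    ENNReal.ofReal (τ r) ≤ ordDesc m (wVec m y) r).sup id

/-- The selected set `S*(y) = {i : |y_i| ≥ a(y)_(i*(y))}` if `i*(y) ≥ 1`,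
and `S*(y) = ∅` otherwise. -/
noncomputable def SstarSel (m : ℕ) (τ : ℕ → ℝ) (y : Fin m → ℝ) : Finset (Fin m) :=
  if 1 ≤ istar m τ y then
    Finset.univ.filter fun i =>
      ordDesc m (absVec m y) (istar m τ y) ≤ ENNReal.ofReal |y i|
  else ∅

open Finset

theorem List.Pairwise.le_getElem_iff_lt_countP {α : Type*} [LinearOrder α] {l : List α}
    (hl : l.Pairwise (· ≥ ·)) (x : α) {n : ℕ} (hn : n < l.length) :
    x ≤ l[n] ↔ n < l.countP (x ≤ ·) := by
  induction l generalizing n with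
  | nil => simp at hn
  | cons a t ih =>
    obtain ⟨ha, ht⟩ := List.pairwise_cons.mp hl
    by_cases hxa : x ≤ a
    · cases n with
      | zero => simp [hxa]
      | succ k => simp [hxa, ih ht (Nat.lt_of_succ_lt_succ hn)]
    · have hcount : t.countP (x ≤ ·) = 0 :=
        List.countP_eq_zero.mpr fun z hz => by
          simpa using fun hxz : x ≤ z => hxa (hxz.trans (ha z hz))
      have hle : ∀ k (hk : k < t.length), ¬ x ≤ t[k] :=
        fun k hk hxk => hxa (hxk.trans (ha _ (List.getElem_mem hk)))
      cases n with
      | zero => simp [hxa, hcount]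
      | succ k => simp [hxa, hcount, hle k]

theorem le_ordDesc_iff {m r : ℕ} (hr : r ∈ Icc 1 m) (v : Fin m → ℝ≥0∞) (x : ℝ≥0∞) :
    x ≤ ordDesc m v r ↔ r ≤ #{i | x ≤ v i} := by
  obtain ⟨hr1, hrm⟩ := mem_Icc.mp hr
  set l := (List.ofFn v).mergeSort (fun a b => decide (b ≤ a))
  have hperm : l.Perm (List.ofFn v) := List.mergeSort_perm _ _
  have hsorted : l.Pairwise (· ≥ ·) := by
    simpa using List.pairwise_mergeSort (le := fun a b : ℝ≥0∞ => decide (b ≤ a))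
      (by simpa using fun a b c hab hbc => hbc.trans hab) (by simpa using fun a b => le_total b a)
      (List.ofFn v)
  have hlen : r - 1 < l.length := by rw [hperm.length_eq, List.length_ofFn]; omega
  have hcount : l.countP (x ≤ ·) = #{i | x ≤ v i} := by
    rw [hperm.countP_eq, List.ofFn_eq_map, List.countP_map, card_def, filter_val,
      ← Multiset.countP_eq_card_filter, Fin.univ_def, Multiset.coe_countP]
    rfl
  rw [ordDesc, List.getD_eq_getElem _ _ hlen, hsorted.le_getElem_iff_lt_countP x hlen, hcount]
  omega

theorem ordDesc_mono {m r : ℕ} (hr : r ∈ Icc 1 m) {v u : Fin m → ℝ≥0∞} (hvu : v ≤ u) :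
    ordDesc m v r ≤ ordDesc m u r := by
  rw [le_ordDesc_iff hr]
  exact ((le_ordDesc_iff hr v _).mp le_rfl).trans (card_le_card fun i hi => by
    simp only [mem_filter, mem_univ, true_and] at hi ⊢
    exact hi.trans (hvu i))

theorem filter_le_update_top {ι : Type*} [Fintype ι] [DecidableEq ι] (v : ι → ℝ≥0∞) (j : ι)
    (x : ℝ≥0∞) : univ.filter (fun i => x ≤ Function.update v j ⊤ i) =
      insert j (univ.filter fun i => x ≤ v i) := by
  ext i
  by_cases hij : i = j <;> simp [hij]

/-- `istar m τ y` and `istarTilde m τ y` are by definition its values at `absVec m y` and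
`wVec m y`. -/
noncomputable def lastIndexAbove (m : ℕ) (τ : ℕ → ℝ) (v : Fin m → ℝ≥0∞) : ℕ :=
  ((Icc 1 m).filter fun r => ENNReal.ofReal (τ r) ≤ ordDesc m v r).sup id

section lastIndexAbove

variable {m : ℕ} {τ : ℕ → ℝ} {v : Fin m → ℝ≥0∞}

theorem le_lastIndexAbove {r : ℕ} (hr : r ∈ Icc 1 m) (h : ENNReal.ofReal (τ r) ≤ ordDesc m v r) :
    r ≤ lastIndexAbove m τ v :=
  le_sup (f := id) (mem_filter.mpr ⟨hr, h⟩)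

theorem lastIndexAbove_spec (h : 1 ≤ lastIndexAbove m τ v) :
    lastIndexAbove m τ v ∈ Icc 1 m ∧
      ENNReal.ofReal (τ (lastIndexAbove m τ v)) ≤ ordDesc m v (lastIndexAbove m τ v) := by
  have hne : ((Icc 1 m).filter fun r => ENNReal.ofReal (τ r) ≤ ordDesc m v r).Nonempty := by
    rw [nonempty_iff_ne_empty]
    rintro hempty
    simp [lastIndexAbove, hempty] at h
  obtain ⟨r, hr, hsup⟩ := exists_mem_eq_sup _ hne id
  rw [lastIndexAbove, hsup]
  exact mem_filter.mp hr

theorem lastIndexAbove_mono {u : Fin m → ℝ≥0∞} (hvu : v ≤ u) :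
    lastIndexAbove m τ v ≤ lastIndexAbove m τ u :=
  sup_mono fun r hr => by
    obtain ⟨hrI, hτr⟩ := mem_filter.mp hr
    exact mem_filter.mpr ⟨hrI, hτr.trans (ordDesc_mono hrI hvu)⟩

theorem one_le_lastIndexAbove_update_top [NeZero m] (j : Fin m) :
    1 ≤ lastIndexAbove m τ (Function.update v j ⊤) := by
  have h1 : 1 ∈ Icc 1 m := mem_Icc.mpr ⟨le_rfl, NeZero.one_le⟩
  refine le_lastIndexAbove h1 (le_top.trans ((le_ordDesc_iff h1 _ _).mpr ?_))
  rw [filter_le_update_top]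
  simp

end lastIndexAbove

/-- `SstarSel m τ y` is by definition `selectedSet m τ (absVec m y)`. -/
noncomputable def selectedSet (m : ℕ) (τ : ℕ → ℝ) (v : Fin m → ℝ≥0∞) : Finset (Fin m) :=
  if 1 ≤ lastIndexAbove m τ v then
    univ.filter fun i => ordDesc m v (lastIndexAbove m τ v) ≤ v i
  else ∅

section selectedSet

variable {m : ℕ} {τ : ℕ → ℝ} {v : Fin m → ℝ≥0∞} (j : Fin m)

theorem mem_selectedSet_iff_one_le_and :
    j ∈ selectedSet m τ v ↔
      1 ≤ lastIndexAbove m τ v ∧ ordDesc m v (lastIndexAbove m τ v) ≤ v j := by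
  unfold selectedSet
  split_ifs with h <;> simp [h]

variable [NeZero m]

theorem ofReal_le_of_mem_selectedSet (hτ : AntitoneOn τ (Icc 1 m : Set ℕ))
    (hj : j ∈ selectedSet m τ v) :
    ENNReal.ofReal (τ (lastIndexAbove m τ (Function.update v j ⊤))) ≤ v j := by
  obtain ⟨h1, hsel⟩ := (mem_selectedSet_iff_one_le_and j).mp hj
  obtain ⟨hI, hτI⟩ := lastIndexAbove_spec h1
  have hK1 : 1 ≤ lastIndexAbove m τ (Function.update v j ⊤) := one_le_lastIndexAbove_update_top j
  obtain ⟨hK, -⟩ := lastIndexAbove_spec hK1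
  have hIK : lastIndexAbove m τ v ≤ lastIndexAbove m τ (Function.update v j ⊤) :=
    lastIndexAbove_mono (le_update_self_iff.mpr le_top)
  calc ENNReal.ofReal (τ (lastIndexAbove m τ (Function.update v j ⊤)))
      ≤ ENNReal.ofReal (τ (lastIndexAbove m τ v)) := ENNReal.ofReal_le_ofReal (hτ hI hK hIK)
    _ ≤ ordDesc m v (lastIndexAbove m τ v) := hτI
    _ ≤ v j := hsel

theorem mem_selectedSet_of_ofReal_le (hτ : AntitoneOn τ (Icc 1 m : Set ℕ))
    (h : ENNReal.ofReal (τ (lastIndexAbove m τ (Function.update v j ⊤))) ≤ v j) :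
    j ∈ selectedSet m τ v := by
  set K := lastIndexAbove m τ (Function.update v j ⊤)
  set I := lastIndexAbove m τ v
  have hK1 : 1 ≤ K := one_le_lastIndexAbove_update_top j
  obtain ⟨hK, hτK⟩ := lastIndexAbove_spec hK1
  have hKI : K ≤ I := le_lastIndexAbove hK (by
    rw [le_ordDesc_iff hK] at hτK ⊢
    rwa [filter_le_update_top, card_insert_of_mem (by simpa using h)] at hτK)
  have h1 : 1 ≤ I := (mem_Icc.mp hK).1.trans hKI
  refine (mem_selectedSet_iff_one_le_and j).mpr ⟨h1, le_of_not_gt fun hlt => ?_⟩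
  obtain ⟨hI, hτI⟩ := lastIndexAbove_spec h1
  have hcard : I + 1 ≤ #(univ.filter fun i => ordDesc m v I ≤ Function.update v j ⊤ i) := by
    rw [filter_le_update_top, card_insert_of_notMem (by simpa using hlt)]
    exact Nat.add_le_add_right ((le_ordDesc_iff hI v _).mp le_rfl) 1
  have hI1 : I + 1 ∈ Icc 1 m :=
    mem_Icc.mpr ⟨by omega, hcard.trans ((card_le_univ _).trans (Fintype.card_fin m).le)⟩
  have : I + 1 ≤ K := le_lastIndexAbove hI1 <|
    calc ENNReal.ofReal (τ (I + 1)) ≤ ENNReal.ofReal (τ I) :=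
          ENNReal.ofReal_le_ofReal (hτ hI hI1 (by omega))
      _ ≤ ordDesc m v I := hτI
      _ ≤ ordDesc m (Function.update v j ⊤) (I + 1) := (le_ordDesc_iff hI1 _ _).mpr hcard
  omega

theorem mem_selectedSet_iff (hτ : AntitoneOn τ (Icc 1 m : Set ℕ)) :
    j ∈ selectedSet m τ v ↔
      ENNReal.ofReal (τ (lastIndexAbove m τ (Function.update v j ⊤))) ≤ v j :=
  ⟨ofReal_le_of_mem_selectedSet j hτ, mem_selectedSet_of_ofReal_le j hτ⟩

end selectedSet

theorem first_coordinate_selected_iff_general (m : ℕ) [NeZero m] (τ : ℕ → ℝ)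
    (hτ_anti : ∀ i ∈ Finset.Icc 1 m, ∀ j ∈ Finset.Icc 1 m, i ≤ j → τ j ≤ τ i)
    (y : Fin m → ℝ) :
    (0 : Fin m) ∈ SstarSel m τ y ↔ τ (istarTilde m τ y) ≤ |y 0| := by
  have hτ : AntitoneOn τ (Icc 1 m : Set ℕ) := fun i hi j hj => hτ_anti i hi j hj
  exact (mem_selectedSet_iff (v := absVec m y) 0 hτ).trans
    (ENNReal.ofReal_le_ofReal_iff (abs_nonneg _))

theorem first_coordinate_selected_iff (m : ℕ) [NeZero m] (hm : 1 ≤ m)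
    (τ : ℕ → ℝ) (hτ_nonneg : ∀ i ∈ Finset.Icc 1 m, 0 ≤ τ i)
    (hτ_anti : ∀ i ∈ Finset.Icc 1 m, ∀ j ∈ Finset.Icc 1 m, i ≤ j → τ j ≤ τ i)
    (y : Fin m → ℝ) :
    (0 : Fin m) ∈ SstarSel m τ y ↔ τ (istarTilde m τ y) ≤ |y 0| :=
  first_coordinate_selected_iff_general m τ hτ_anti y
end

section
/- With the notation of the selection-rule setup: if τ(ĩ*(y)) ≤ |y_1| then i*(y) = ĩ*(y). Consequently, on the event that coordinate 1 is selected, i*(y) is constant as a function of y_1: for any y_1, y_1' with τ(ĩ*) ≤ min(|y_1|, |y_1'|) (where ĩ* is computed from the common values y_2,...,y_m), the value of i* for (y_1, y_2, ..., y_m) equals the value of i* for (y_1', y_2, ..., y_m), both equal to ĩ*. -/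
/-!
Replacing `|y_1|` by `+∞` only enlarges the order statistics, so `i*(y) ≤ ĩ*(y)`. Conversely,
at `k = ĩ*(y)` we have `τ(k) ≤ w(y)_(k)`, and if also `τ(k) ≤ |y_1|` then `τ(k)` is still
below `k` entries of `a(y)`: those of `w(y)` lying above `τ(k)`, with `+∞` traded for
`|y_1|`. Hence `τ(k) ≤ a(y)_(k)` and `k ≤ i*(y)`.
-/

open Classical ENNReal

theorem List.le_getElem_iff_lt_countP_of_pairwise_ge {α : Type*} [LinearOrder α]
    {l : List α} (hl : l.Pairwise (· ≥ ·)) (t : α) {j : ℕ} (hj : j < l.length) :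
    t ≤ l[j] ↔ j < l.countP (fun x => t ≤ x) := by
  induction l generalizing j with
  | nil => simp at hj
  | cons x xs ih =>
    obtain ⟨hx, hxs⟩ := List.pairwise_cons.mp hl
    rw [List.countP_cons]
    cases j with
    | zero =>
      rw [List.getElem_cons_zero]
      refine ⟨fun h => by simp [h], fun h => ?_⟩
      by_contra htx
      obtain ⟨a, ha, hta⟩ : ∃ a ∈ xs, t ≤ a := by simpa [htx] using h
      exact htx (hta.trans (hx a ha))
    | succ j =>
      have hj' : j < xs.length := by simpa using hj
      rw [List.getElem_cons_succ, ih hxs hj']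
      constructor
      · intro h
        have htx : t ≤ x := ((ih hxs hj').mpr h).trans (hx _ (List.getElem_mem hj'))
        simp [htx, h]
      · intro h
        split_ifs at h <;> omega

theorem List.countP_ofFn {α : Type*} {m : ℕ} (v : Fin m → α) (p : α → Prop)
    [DecidablePred p] :
    (List.ofFn v).countP (fun x => p x) = (Finset.univ.filter fun i => p (v i)).card := by
  induction m with
  | zero => simp
  | succ n ih =>
    rw [List.ofFn_succ, List.countP_cons, ih, Fin.card_filter_univ_succ]
    split_ifs <;> simp_all

theorem le_ordDesc_iff_s4 {m r : ℕ} (hr1 : 1 ≤ r) (hrm : r ≤ m) (v : Fin m → ℝ≥0∞)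
    (t : ℝ≥0∞) :
    t ≤ ordDesc m v r ↔ r ≤ (Finset.univ.filter fun i => t ≤ v i).card := by
  have hperm := List.mergeSort_perm (List.ofFn v) (fun a b => decide (b ≤ a))
  have hlen : r - 1 < ((List.ofFn v).mergeSort (fun a b => decide (b ≤ a))).length := by
    rw [hperm.length_eq, List.length_ofFn]; omega
  rw [ordDesc, List.getD_eq_getElem _ _ hlen,
    List.le_getElem_iff_lt_countP_of_pairwise_ge (List.pairwise_mergeSort' (· ≥ ·) _) t hlen,
    hperm.countP_eq, List.countP_ofFn]
  omega

theorem le_ordDesc_of_le_ordDesc {m r : ℕ} (hr1 : 1 ≤ r) (hrm : r ≤ m)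
    {v w : Fin m → ℝ≥0∞} {t : ℝ≥0∞} (ht : t ≤ ordDesc m w r)
    (hwv : ∀ i, t ≤ w i → t ≤ v i) : t ≤ ordDesc m v r := by
  rw [le_ordDesc_iff_s4 hr1 hrm] at ht ⊢
  exact ht.trans (Finset.card_le_card (Finset.monotone_filter_right _ fun i _ => hwv i))

theorem ordDesc_mono_s4 {m r : ℕ} (hr1 : 1 ≤ r) (hrm : r ≤ m) {v w : Fin m → ℝ≥0∞}
    (h : v ≤ w) : ordDesc m v r ≤ ordDesc m w r :=
  le_ordDesc_of_le_ordDesc hr1 hrm le_rfl fun i hi => hi.trans (h i)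

noncomputable def lastCrossing (m : ℕ) (τ : ℕ → ℝ) (v : Fin m → ℝ≥0∞) : ℕ :=
  ((Finset.Icc 1 m).filter fun r => ENNReal.ofReal (τ r) ≤ ordDesc m v r).sup id

namespace lastCrossing

variable {m : ℕ} {τ : ℕ → ℝ}

theorem mono {v w : Fin m → ℝ≥0∞} (h : v ≤ w) : lastCrossing m τ v ≤ lastCrossing m τ w :=
  Finset.sup_mono <| Finset.monotone_filter_right _ fun _ hr hv =>
    hv.trans (ordDesc_mono_s4 (Finset.mem_Icc.mp hr).1 (Finset.mem_Icc.mp hr).2 h)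

theorem le_of_le_ordDesc {v : Fin m → ℝ≥0∞} {r : ℕ} (hr1 : 1 ≤ r) (hrm : r ≤ m)
    (h : ENNReal.ofReal (τ r) ≤ ordDesc m v r) : r ≤ lastCrossing m τ v :=
  Finset.le_sup (f := id) (Finset.mem_filter.mpr ⟨Finset.mem_Icc.mpr ⟨hr1, hrm⟩, h⟩)

theorem eq_zero_or_crossing (v : Fin m → ℝ≥0∞) :
    lastCrossing m τ v = 0 ∨
      (1 ≤ lastCrossing m τ v ∧ lastCrossing m τ v ≤ m ∧
        ENNReal.ofReal (τ (lastCrossing m τ v)) ≤ ordDesc m v (lastCrossing m τ v)) := by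
  set s := (Finset.Icc 1 m).filter fun r => ENNReal.ofReal (τ r) ≤ ordDesc m v r
  rcases s.eq_empty_or_nonempty with hs | hs
  · exact Or.inl (by simp [lastCrossing, s, hs])
  · obtain ⟨k, hk, hks⟩ := Finset.sup_mem_of_nonempty (f := id) hs
    obtain ⟨hkIcc, hkτ⟩ := Finset.mem_filter.mp hk
    have hkl : lastCrossing m τ v = k := hks.symm
    rw [hkl]
    exact Or.inr ⟨(Finset.mem_Icc.mp hkIcc).1, (Finset.mem_Icc.mp hkIcc).2, hkτ⟩

end lastCrossing

theorem istar_eq_lastCrossing {m : ℕ} {τ : ℕ → ℝ} (y : Fin m → ℝ) :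
    istar m τ y = lastCrossing m τ (absVec m y) :=
  rfl

section

variable {m : ℕ} [NeZero m] {τ : ℕ → ℝ}

theorem istarTilde_eq_lastCrossing (y : Fin m → ℝ) :
    istarTilde m τ y = lastCrossing m τ (wVec m y) :=
  rfl

theorem absVec_le_wVec (y : Fin m → ℝ) : absVec m y ≤ wVec m y := by
  intro i
  rcases eq_or_ne i 0 with rfl | hi
  · simp [wVec]
  · rw [wVec, Function.update_of_ne hi]

theorem istar_le_istarTilde (y : Fin m → ℝ) : istar m τ y ≤ istarTilde m τ y :=
  lastCrossing.mono (absVec_le_wVec y)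

theorem min_le_ordDesc_absVec (y : Fin m → ℝ) {k : ℕ} (hk1 : 1 ≤ k) (hkm : k ≤ m) :
    min (ordDesc m (wVec m y) k) (ENNReal.ofReal |y 0|) ≤ ordDesc m (absVec m y) k := by
  refine le_ordDesc_of_le_ordDesc hk1 hkm (min_le_left _ _) fun i hi => ?_
  rcases eq_or_ne i 0 with rfl | h0
  · exact min_le_right _ _
  · rwa [wVec, Function.update_of_ne h0] at hi

theorem istar_eq_istarTilde {y : Fin m → ℝ} (hy : τ (istarTilde m τ y) ≤ |y 0|) :
    istar m τ y = istarTilde m τ y := by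
  refine le_antisymm (istar_le_istarTilde y) ?_
  rcases lastCrossing.eq_zero_or_crossing (τ := τ) (wVec m y) with h0 | ⟨hk1, hkm, hkτ⟩
  · rw [istarTilde_eq_lastCrossing, h0]
    exact Nat.zero_le _
  · rw [← istarTilde_eq_lastCrossing] at hk1 hkm hkτ
    apply lastCrossing.le_of_le_ordDesc hk1 hkm
    exact (le_min hkτ (ENNReal.ofReal_le_ofReal hy)).trans (min_le_ordDesc_absVec y hk1 hkm)

theorem wVec_congr {y y' : Fin m → ℝ} (h : ∀ i, i ≠ 0 → y i = y' i) : wVec m y = wVec m y' := by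
  funext i
  rcases eq_or_ne i 0 with rfl | hi
  · simp [wVec]
  · simp [wVec, Function.update_of_ne hi, absVec, h i hi]

theorem istarTilde_congr {y y' : Fin m → ℝ} (h : ∀ i, i ≠ 0 → y i = y' i) :
    istarTilde m τ y = istarTilde m τ y' := by
  rw [istarTilde_eq_lastCrossing, istarTilde_eq_lastCrossing, wVec_congr h]

end

theorem istar_constant_on_selection_general (m : ℕ) [NeZero m]
    (τ : ℕ → ℝ) :
    -- if τ(ĩ*(y)) ≤ |y_1| then i*(y) = ĩ*(y) ...
    (∀ y : Fin m → ℝ, τ (istarTilde m τ y) ≤ |y 0| → istar m τ y = istarTilde m τ y) ∧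
    -- ... and consequently i* is constant in the first coordinate on the event that
    -- coordinate 1 is selected: if y and y' agree off the first coordinate and
    -- τ(ĩ*) ≤ min(|y_1|, |y'_1|), then i*(y) = i*(y') = ĩ*(y) = ĩ*(y')
    (∀ y y' : Fin m → ℝ, (∀ i : Fin m, i ≠ 0 → y i = y' i) →
      τ (istarTilde m τ y) ≤ min |y 0| |y' 0| →
      istarTilde m τ y = istarTilde m τ y' ∧
      istar m τ y = istarTilde m τ y ∧ istar m τ y' = istarTilde m τ y ∧
      istar m τ y = istar m τ y') := by
  refine ⟨fun y hy => istar_eq_istarTilde hy, fun y y' hagree hmin => ?_⟩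
  have htilde : istarTilde m τ y = istarTilde m τ y' := istarTilde_congr hagree
  have hy : istar m τ y = istarTilde m τ y := istar_eq_istarTilde (hmin.trans (min_le_left _ _))
  have hy' : istar m τ y' = istarTilde m τ y := by
    rw [htilde]
    exact istar_eq_istarTilde (htilde ▸ hmin.trans (min_le_right _ _))
  exact ⟨htilde, hy, hy', hy.trans hy'.symm⟩

theorem istar_constant_on_selection (m : ℕ) [NeZero m] (hm : 1 ≤ m)
    (τ : ℕ → ℝ) (hτ_nonneg : ∀ i ∈ Finset.Icc 1 m, 0 ≤ τ i)
    (hτ_anti : ∀ i ∈ Finset.Icc 1 m, ∀ j ∈ Finset.Icc 1 m, i ≤ j → τ j ≤ τ i) :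
    -- if τ(ĩ*(y)) ≤ |y_1| then i*(y) = ĩ*(y) ...
    (∀ y : Fin m → ℝ, τ (istarTilde m τ y) ≤ |y 0| → istar m τ y = istarTilde m τ y) ∧
    -- ... and consequently i* is constant in the first coordinate on the event that
    -- coordinate 1 is selected: if y and y' agree off the first coordinate and
    -- τ(ĩ*) ≤ min(|y_1|, |y'_1|), then i*(y) = i*(y') = ĩ*(y) = ĩ*(y')
    (∀ y y' : Fin m → ℝ, (∀ i : Fin m, i ≠ 0 → y i = y' i) →
      τ (istarTilde m τ y) ≤ min |y 0| |y' 0| →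
      istarTilde m τ y = istarTilde m τ y' ∧
      istar m τ y = istarTilde m τ y ∧ istar m τ y' = istarTilde m τ y ∧
      istar m τ y = istar m τ y') :=
  istar_constant_on_selection_general m τ
end

section
/- Let c > 0 and 0 < α < 1/2. There is no family {C(y)}_{y ∈ ℝ} of subsets of ℝ with the following properties: (i) for every y with |y| > c, either C(y) ⊆ (−∞, 0] or C(y) ⊆ (0, ∞); (ii) the set B⁻ = {y : |y| > c and C(y) ⊆ (−∞, 0]} is Borel, and for every θ ∈ ℝ the set {y : θ ∈ C(y)} is Borel; (iii) for every θ ∈ ℝ, Pr(θ ∈ C(Y) | |Y| > c) ≥ 1 − α, where Y ∼ N(θ, 1). -/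
/-!
At `θ = 0`, covering `0` forces `C(y) ⊆ (-∞, 0]` on `{|y| > c}`, so the conditional probability
of `B⁻` given `|Y| > c` is at least `1 - α`. For `θ > 0`, covering `θ` forces `y ∉ B⁻`, so that
conditional probability is at most `α`. Dominated convergence makes `θ ↦ Pr_θ(Y ∈ S)` continuous
for every Borel `S`; letting `θ ↓ 0` gives `1 - α ≤ α`.
-/

open MeasureTheory ProbabilityTheory Set Filter Topology
open scoped NNReal ENNReal

namespace ProbabilityTheory

lemma gaussianPDFReal_le_of_abs_sub_le_one {t m : ℝ} (htm : |t - m| ≤ 1) (v : ℝ≥0) (x : ℝ) :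
    gaussianPDFReal t v x ≤ (√(2 * Real.pi * v))⁻¹ * Real.exp (1 / (2 * v)) *
      Real.exp (-(1 / (4 * v)) * (x - m) ^ 2) := by
  -- `(a + b)² ≤ 2a² + 2b²` with `a = x - t`, `b = t - m`
  have hsq : (x - m) ^ 2 ≤ 2 * (x - t) ^ 2 + 2 := by
    nlinarith [abs_le.mp htm, sq_nonneg (x - 2 * t + m)]
  have hexp : -(x - t) ^ 2 / (2 * v) ≤ 1 / (2 * v) + -(1 / (4 * v)) * (x - m) ^ 2 := by
    have : -(x - t) ^ 2 / (2 * v) - (1 / (2 * v) + -(1 / (4 * v)) * (x - m) ^ 2)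
        = ((x - m) ^ 2 - 2 * (x - t) ^ 2 - 2) / (4 * v) := by
      rcases eq_or_ne (v : ℝ) 0 with hv | hv
      · simp [hv]
      · field_simp; ring
    have : ((x - m) ^ 2 - 2 * (x - t) ^ 2 - 2) / (4 * v) ≤ 0 :=
      div_nonpos_of_nonpos_of_nonneg (by linarith) (by positivity)
    linarith
  rw [gaussianPDFReal, mul_assoc _ (Real.exp _), ← Real.exp_add]
  gcongr

lemma continuous_gaussianReal_apply {v : ℝ≥0} (hv : v ≠ 0) {s : Set ℝ} (hs : MeasurableSet s) :
    Continuous fun μ ↦ gaussianReal μ v s := by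
  refine continuous_iff_continuousAt.2 fun m ↦ ?_
  simp_rw [ContinuousAt, gaussianReal_apply _ hv, ← lintegral_indicator hs]
  set K := (√(2 * Real.pi * v))⁻¹ * Real.exp (1 / (2 * v))
  refine tendsto_lintegral_filter_of_dominated_convergence
    (fun x ↦ ENNReal.ofReal (K * Real.exp (-(1 / (4 * v)) * (x - m) ^ 2)))
    (Eventually.of_forall fun t ↦ (measurable_gaussianPDF t v).indicator hs) ?_ ?_ ?_
  · filter_upwards [Metric.closedBall_mem_nhds m one_pos] with t ht
    refine Eventually.of_forall fun x ↦ (indicator_le_self _ _ x).trans ?_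
    exact ENNReal.ofReal_le_ofReal (gaussianPDFReal_le_of_abs_sub_le_one ht v x)
  · exact (((integrable_exp_neg_mul_sq (by positivity)).comp_sub_right m).const_mul K
      |>.lintegral_lt_top).ne
  · refine Eventually.of_forall fun x ↦ ?_
    have : Continuous fun t ↦ gaussianPDF t v x :=
      ENNReal.continuous_ofReal.comp (by simp only [gaussianPDFReal]; fun_prop)
    by_cases hx : x ∈ s
    · simpa [indicator_of_mem hx] using this.tendsto m
    · simp [indicator_of_notMem hx]

lemma tendsto_cond_apply {ι Ω : Type*} [MeasurableSpace Ω] {l : Filter ι} {μ : ι → Measure Ω}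
    {ν : Measure Ω} [IsFiniteMeasure ν] {s t : Set Ω} (hs : MeasurableSet s) (hνs : ν s ≠ 0)
    (h_s : Tendsto (fun i ↦ μ i s) l (𝓝 (ν s)))
    (h_st : Tendsto (fun i ↦ μ i (s ∩ t)) l (𝓝 (ν (s ∩ t)))) :
    Tendsto (fun i ↦ (μ i)[t | s]) l (𝓝 ν[t | s]) := by
  simp only [cond_apply hs]
  exact ENNReal.Tendsto.mul (tendsto_inv_iff.2 h_s) (Or.inr (measure_ne_top _ _)) h_st
    (Or.inr (ENNReal.inv_ne_top.2 hνs))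

end ProbabilityTheory

theorem no_sign_determining_conditional_CI_general (c α : ℝ) (hα' : α < 1/2) :
    ¬ ∃ C : ℝ → Set ℝ,
      -- (i) sign determination on {|y| > c}
      (∀ y : ℝ, c < |y| → C y ⊆ Set.Iic 0 ∨ C y ⊆ Set.Ioi 0) ∧
      -- (ii) measurability
      MeasurableSet {y : ℝ | c < |y| ∧ C y ⊆ Set.Iic 0} ∧
      (∀ t : ℝ, MeasurableSet {y : ℝ | t ∈ C y}) ∧
      -- (iii) conditional coverage at least 1 − α given |Y| > c, for Y ∼ N(θ, 1)
      (∀ t : ℝ, ENNReal.ofReal (1 - α) ≤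
        gaussianReal t 1 ({y : ℝ | t ∈ C y} ∩ {y : ℝ | c < |y|}) /
          gaussianReal t 1 {y : ℝ | c < |y|}) := by
  rintro ⟨C, hsign, hA, hC, hcov⟩
  set D := {y : ℝ | c < |y|}
  set A := {y : ℝ | c < |y| ∧ C y ⊆ Iic 0}
  have hD : MeasurableSet D := measurableSet_lt measurable_const measurable_abs
  have hD0 (t : ℝ) : gaussianReal t 1 D ≠ 0 := by
    intro h
    have hsub : Ioi |c| ⊆ D := fun y hy ↦ (le_abs_self c).trans_lt (hy.trans_le (le_abs_self y))
    simpa [Real.volume_Ioi] using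
      measure_mono_null hsub (gaussianReal_absolutelyContinuous' t one_ne_zero h)
  have hcov_cond (t : ℝ) : ENNReal.ofReal (1 - α) ≤ (gaussianReal t 1)[{y | t ∈ C y} | D] := by
    rw [cond_apply hD, inter_comm, ← ENNReal.div_eq_inv_mul]
    exact hcov t
  have hA_zero : ENNReal.ofReal (1 - α) ≤ (gaussianReal 0 1)[A | D] := by
    refine (hcov_cond 0).trans ?_
    rw [← cond_inter_self hD]
    refine measure_mono fun y ⟨hyD, hy0⟩ ↦ ⟨hyD, ?_⟩
    exact (hsign y hyD).resolve_right fun h ↦ lt_irrefl (0 : ℝ) (h hy0)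
  have hA_pos (t : ℝ) (ht : 0 < t) : (gaussianReal t 1)[A | D] + ENNReal.ofReal (1 - α) ≤ 1 := by
    have := cond_isProbabilityMeasure (hD0 t)
    calc _ ≤ (gaussianReal t 1)[A | D] + (gaussianReal t 1)[{y | t ∈ C y} | D] := by
          gcongr; exact hcov_cond t
      _ = (gaussianReal t 1)[A ∪ {y | t ∈ C y} | D] := by
        refine (measure_union ?_ (hC t)).symm
        exact disjoint_left.2 fun y ⟨_, hy⟩ hyt ↦ (hy hyt).not_gt ht
      _ ≤ 1 := prob_le_one
  have hlim : Tendsto (fun t ↦ (gaussianReal t 1)[A | D]) (𝓝[>] 0) (𝓝 (gaussianReal 0 1)[A | D]) :=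
    tendsto_nhdsWithin_of_tendsto_nhds <| tendsto_cond_apply hD (hD0 0)
      ((continuous_gaussianReal_apply one_ne_zero hD).tendsto 0)
      ((continuous_gaussianReal_apply one_ne_zero (hD.inter hA)).tendsto 0)
  have hA_lim : (gaussianReal 0 1)[A | D] + ENNReal.ofReal (1 - α) ≤ 1 :=
    le_of_tendsto (hlim.add_const _) (eventually_nhdsWithin_of_forall hA_pos)
  have : ENNReal.ofReal (2 * (1 - α)) ≤ 1 := by
    rw [two_mul, ENNReal.ofReal_add (by linarith) (by linarith)]
    exact (add_le_add_left hA_zero _).trans hA_lim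
  rw [ENNReal.ofReal_le_one] at this
  linarith

theorem no_sign_determining_conditional_CI (c α : ℝ) (hc : 0 < c)
    (hα : 0 < α) (hα' : α < 1/2) :
    ¬ ∃ C : ℝ → Set ℝ,
      -- (i) sign determination on {|y| > c}
      (∀ y : ℝ, c < |y| → C y ⊆ Set.Iic 0 ∨ C y ⊆ Set.Ioi 0) ∧
      -- (ii) measurability
      MeasurableSet {y : ℝ | c < |y| ∧ C y ⊆ Set.Iic 0} ∧
      (∀ t : ℝ, MeasurableSet {y : ℝ | t ∈ C y}) ∧
      -- (iii) conditional coverage at least 1 − α given |Y| > c, for Y ∼ N(θ, 1)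
      (∀ t : ℝ, ENNReal.ofReal (1 - α) ≤
        gaussianReal t 1 ({y : ℝ | t ∈ C y} ∩ {y : ℝ | c < |y|}) /
          gaussianReal t 1 {y : ℝ | c < |y|}) :=
  no_sign_determining_conditional_CI_general c α hα'
end

section
/- Let α ∈ (0, 0.25), ψ ∈ [1/2, 0.9), and θ ∈ ℝ, and let Y ∼ N(θ, 1). Then Pr(|Y| ≥ c̄ and θ ∉ C_MQC(Y; α)) ≥ α/2, i.e., the probability that the MQC interval at level α both determines the sign and fails to cover θ is at least α/2. -/
/-!
STATEMENT 7: For α ∈ (0, 0.25), ψ ∈ [1/2, 0.9), θ ∈ ℝ and Y ∼ N(θ, 1), the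
probability that the MQC interval at level α both determines the sign
(i.e. |Y| ≥ c̄) and fails to cover θ is at least α/2.
-/

open MeasureTheory ProbabilityTheory Real Set Pointwise

/-- The standard normal cumulative distribution function `Φ`. -/
noncomputable def Phi : ℝ → ℝ := fun x => ProbabilityTheory.cdf (gaussianReal 0 1) x

/-- The inverse `Φ⁻¹` of the standard normal CDF (junk values off `(0,1)`). -/
noncomputable def PhiInv : ℝ → ℝ := Function.invFun Phi

section MQC

variable (F Finv : ℝ → ℝ)

/-- `c̄ = F⁻¹(1 − ψα)`. -/
noncomputable def cbar (α ψ : ℝ) : ℝ := Finv (1 - ψ * α)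

/-- `c_{α/2} = F⁻¹(1 − α/2)`. -/
noncomputable def chalf (α : ℝ) : ℝ := Finv (1 - α / 2)

/-- `c̃ = F⁻¹(1 − α + F(−c̄))`. -/
noncomputable def ctil (α ψ : ℝ) : ℝ := Finv (1 - α + F (-cbar Finv α ψ))

/-- `g(θ) = θ + F⁻¹(1 − α + F(−c̄ − θ))`. -/
noncomputable def gFun (α ψ : ℝ) (t : ℝ) : ℝ :=
  t + Finv (1 - α + F (-cbar Finv α ψ - t))

/-- The inverse of `g` on the interval `(c_{α/2} − c̄, ∞)`, where `g` is strictly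
increasing. -/
noncomputable def gInv (α ψ : ℝ) (y : ℝ) : ℝ :=
  sSup {t : ℝ | chalf Finv α - cbar Finv α ψ < t ∧ gFun F Finv α ψ t ≤ y}

/-- The modified quasi-conventional (MQC) interval for `y ≥ 0`, built from the
CDF `F` and quantile function `Finv`. -/
noncomputable def mqcGenNonneg (α ψ : ℝ) (y : ℝ) : Set ℝ :=
  if y < cbar Finv α ψ then
    Set.Ioo (-(cbar Finv α ψ + chalf Finv α)) (cbar Finv α ψ + chalf Finv α)
  else if y < chalf Finv α then Set.Ico 0 (y + chalf Finv α)
  else if y < ctil F Finv α ψ then Set.Ioo 0 (y + chalf Finv α)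
  else if y ≤ gFun F Finv α ψ (cbar Finv α ψ + chalf Finv α) then
    Set.Ioo (gInv F Finv α ψ y) (y + chalf Finv α)
  else if y < cbar Finv α ψ + 2 * chalf Finv α then
    Set.Ioo (cbar Finv α ψ + chalf Finv α) (y + chalf Finv α)
  else Set.Ioo (y - chalf Finv α) (y + chalf Finv α)

/-- The MQC interval `C_MQC(y; α)`, with `C_MQC(−y; α) = −C_MQC(y; α)`. -/
noncomputable def mqcGen (α ψ : ℝ) (y : ℝ) : Set ℝ :=
  if 0 ≤ y then mqcGenNonneg F Finv α ψ y else -mqcGenNonneg F Finv α ψ (-y)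

end MQC

/-- The standard-normal MQC interval `C_MQC(y; α)` with parameter `ψ`. -/
noncomputable def mqc (α ψ : ℝ) (y : ℝ) : Set ℝ := mqcGen Phi PhiInv α ψ y

/-!
Write `b = c̄`, `c = c_{α/2}` and `Y = θ + Z` with `Z` standard normal. Since
`C_MQC(-y) = -C_MQC(y)` for `y ≠ 0`, we may assume `θ ≥ 0`. For `θ = 0` the event `Y > c`,
for `0 < θ ≤ c - b` the event `Y ≤ -b`, and for `θ > b + c` the event `Y > θ + c` lie in the
event in question and have probability at least `α/2`. For `c - b < θ ≤ b + c` take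
`Y ≤ -b` or `Y > max (g θ) c̃`: if `g θ ≥ c̃` its probability is exactly `α`; otherwise
log-concavity of `Φ` gives `Φ(-b - θ) Φ(θ - c̃) ≥ Φ(-b) Φ(-c̃) = ψ(1 - ψ)α² ≥ α²/16`, and
AM-GM bounds the sum of the two tails below by `α/2`.
-/

lemma gaussianPDFReal_zero_one_neg (x : ℝ) :
    gaussianPDFReal 0 1 (-x) = gaussianPDFReal 0 1 x := by
  simp [gaussianPDFReal]

lemma Phi_eq_integral (x : ℝ) : Phi x = ∫ t in Iic x, gaussianPDFReal 0 1 t := by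
  rw [Phi, cdf_eq_real, measureReal_def, gaussianReal_apply_eq_integral _ one_ne_zero,
    ENNReal.toReal_ofReal (integral_nonneg fun _ => gaussianPDFReal_nonneg _ _ _)]

lemma Phi_neg (x : ℝ) : Phi (-x) = 1 - Phi x := by
  have hsplit := integral_add_compl (measurableSet_Iic (a := x)) (integrable_gaussianPDFReal 0 1)
  rw [compl_Iic, integral_gaussianPDFReal_eq_one 0 one_ne_zero, ← Phi_eq_integral] at hsplit
  rw [Phi_eq_integral, ← integral_comp_neg_Ioi]
  simp only [gaussianPDFReal_zero_one_neg]
  linarith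

lemma hasDerivAt_Phi (x : ℝ) : HasDerivAt Phi (gaussianPDFReal 0 1 x) x := by
  have hPhi : Phi = fun x => Phi 0 + ∫ t in (0 : ℝ)..x, gaussianPDFReal 0 1 t := by
    funext x
    rw [Phi_eq_integral, Phi_eq_integral, ← intervalIntegral.integral_Iic_sub_Iic
      (integrable_gaussianPDFReal 0 1).integrableOn (integrable_gaussianPDFReal 0 1).integrableOn]
    ring
  rw [hPhi]
  have hcont : Continuous (gaussianPDFReal 0 1) := by unfold gaussianPDFReal; fun_prop
  exact (intervalIntegral.integral_hasDerivAt_right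
    (integrable_gaussianPDFReal 0 1).intervalIntegrable (hcont.stronglyMeasurableAtFilter _ _)
    hcont.continuousAt).const_add _

lemma continuous_Phi : Continuous Phi :=
  continuous_iff_continuousAt.2 fun x => (hasDerivAt_Phi x).continuousAt

lemma strictMono_Phi : StrictMono Phi :=
  strictMono_of_deriv_pos fun x =>
    (hasDerivAt_Phi x).deriv ▸ gaussianPDFReal_pos _ _ _ one_ne_zero

lemma Phi_pos (x : ℝ) : 0 < Phi x :=
  (cdf_nonneg _ (x - 1)).trans_lt (strictMono_Phi (by linarith))

lemma Phi_neg_le_Phi_neg_iff {x y : ℝ} : Phi (-y) ≤ Phi (-x) ↔ x ≤ y :=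
  strictMono_Phi.le_iff_le.trans neg_le_neg_iff

lemma Phi_zero : Phi 0 = 1 / 2 := by
  have h := Phi_neg 0
  rw [neg_zero] at h
  linarith

lemma Phi_PhiInv {p : ℝ} (h0 : 0 < p) (h1 : p < 1) : Phi (PhiInv p) = p := by
  obtain ⟨a, ha⟩ := ((tendsto_cdf_atBot (gaussianReal 0 1)).eventually_lt_const h0).exists
  obtain ⟨b, hb⟩ := ((tendsto_cdf_atTop (gaussianReal 0 1)).eventually_const_lt h1).exists
  exact Function.invFun_eq (intermediate_value_univ a b continuous_Phi ⟨ha.le, hb.le⟩)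

lemma Phi_neg_PhiInv_one_sub {p : ℝ} (h0 : 0 < p) (h1 : p < 1) : Phi (-PhiInv (1 - p)) = p := by
  rw [Phi_neg, Phi_PhiInv (by linarith) (by linarith)]
  ring

lemma gaussianReal_Iic (θ t : ℝ) :
    gaussianReal θ 1 (Iic t) = ENNReal.ofReal (Phi (t - θ)) := by
  have hmap : (gaussianReal 0 1).map (· + θ) = gaussianReal θ 1 := by
    rw [gaussianReal_map_add_const, zero_add]
  rw [← hmap, Measure.map_apply (measurable_add_const θ) measurableSet_Iic, Phi, ofReal_cdf]
  congr 1
  ext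
  simp [le_sub_iff_add_le]

lemma gaussianReal_Ioi (θ t : ℝ) :
    gaussianReal θ 1 (Ioi t) = ENNReal.ofReal (Phi (θ - t)) := by
  rw [← compl_Iic, prob_compl_eq_one_sub measurableSet_Iic, gaussianReal_Iic,
    ← ENNReal.ofReal_one, ← ENNReal.ofReal_sub _ (Phi_pos _).le, ← Phi_neg, neg_sub]

lemma gaussianReal_neg_apply (μ : ℝ) (v : NNReal) (s : Set ℝ) :
    gaussianReal μ v (-s) = gaussianReal (-μ) v s := by
  rw [← gaussianReal_map_neg]
  exact ((MeasurableEquiv.neg ℝ).map_apply s).symm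

lemma Phi_eq_integral_Iic_zero (x : ℝ) : Phi x = ∫ s in Iic 0, gaussianPDFReal 0 1 (s + x) := by
  rw [Phi_eq_integral, ← (measurePreserving_add_right volume x).setIntegral_preimage_emb
    (measurableEmbedding_addRight x)]
  congr 1
  ext s
  simp

lemma gaussianPDFReal_zero_one_mul (a b : ℝ) :
    gaussianPDFReal 0 1 a * gaussianPDFReal 0 1 b
      = (√(2 * π))⁻¹ ^ 2 * exp (-(a ^ 2 + b ^ 2) / 2) := by
  simp only [gaussianPDFReal, NNReal.coe_one, mul_one, sub_zero]
  rw [sq, mul_mul_mul_comm, ← exp_add]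
  ring_nf

/-- The Mills ratio `Φ / φ` of the standard normal distribution is nondecreasing. -/
lemma gaussianPDFReal_mul_Phi_le {x y : ℝ} (hxy : x ≤ y) :
    gaussianPDFReal 0 1 y * Phi x ≤ gaussianPDFReal 0 1 x * Phi y := by
  have hint (z : ℝ) : Integrable (fun s => gaussianPDFReal 0 1 (s + z)) := by
    simpa only [gaussianPDFReal_add] using integrable_gaussianPDFReal (0 - z) 1
  rw [Phi_eq_integral_Iic_zero, Phi_eq_integral_Iic_zero, ← integral_const_mul,
    ← integral_const_mul]
  refine setIntegral_mono_on ((hint x).const_mul _).integrableOn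
    ((hint y).const_mul _).integrableOn measurableSet_Iic fun s (hs : s ≤ 0) => ?_
  rw [gaussianPDFReal_zero_one_mul, gaussianPDFReal_zero_one_mul]
  refine mul_le_mul_of_nonneg_left (exp_le_exp.2 ?_) (by positivity)
  nlinarith [mul_nonpos_of_nonpos_of_nonneg hs (sub_nonneg.2 hxy)]

lemma antitoneOn_Phi_mul_Phi (m : ℝ) :
    AntitoneOn (fun s => Phi (m + s) * Phi (m - s)) (Ici 0) := by
  have hP (s : ℝ) : HasDerivAt (fun s => Phi (m + s) * Phi (m - s))
      (gaussianPDFReal 0 1 (m + s) * Phi (m - s) - Phi (m + s) * gaussianPDFReal 0 1 (m - s))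
      s :=
    (((hasDerivAt_Phi _).comp_const_add m s).fun_mul
      ((hasDerivAt_Phi _).comp_const_sub m s)).congr_deriv (by ring)
  refine antitoneOn_of_deriv_nonpos (convex_Ici 0)
    (HasDerivAt.continuousOn fun s _ => hP s)
    (fun s _ => (hP s).differentiableAt.differentiableWithinAt) fun s hs => ?_
  rw [interior_Ici, mem_Ioi] at hs
  rw [(hP s).deriv, sub_nonpos, mul_comm (Phi _)]
  exact gaussianPDFReal_mul_Phi_le (by linarith)

/-- Log-concavity of `Φ`. -/
lemma Phi_mul_Phi_le {a b u : ℝ} (hau : a ≤ u) (hub : u ≤ b) :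
    Phi a * Phi b ≤ Phi u * Phi (a + b - u) := by
  wlog hmu : (a + b) / 2 ≤ u generalizing u
  · have h := this (u := a + b - u) (by linarith) (by linarith) (by linarith)
    rwa [sub_sub_cancel, mul_comm (Phi (a + b - u))] at h
  have h := antitoneOn_Phi_mul_Phi ((a + b) / 2) (a := u - (a + b) / 2) (b := (b - a) / 2)
    (by simp only [mem_Ici]; linarith) (by simp only [mem_Ici]; linarith) (by linarith)
  calc Phi a * Phi b = Phi ((a + b) / 2 + (b - a) / 2) * Phi ((a + b) / 2 - (b - a) / 2) := by
        rw [mul_comm]; ring_nf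
    _ ≤ _ := h
    _ = Phi u * Phi (a + b - u) := by ring_nf

section Interval

variable {F Finv : ℝ → ℝ} {α ψ y t : ℝ}

lemma mqcGen_neg (hy : y ≠ 0) : mqcGen F Finv α ψ (-y) = -mqcGen F Finv α ψ y := by
  rcases hy.lt_or_gt with hy | hy
  · rw [mqcGen, if_pos (by linarith), mqcGen, if_neg (by linarith), neg_neg]
  · rw [mqcGen, if_neg (by linarith), mqcGen, if_pos hy.le, neg_neg]

lemma gInv_nonneg (hbc : cbar Finv α ψ ≤ chalf Finv α) (y : ℝ) : 0 ≤ gInv F Finv α ψ y :=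
  Real.sSup_nonneg fun _ ht => by linarith [ht.1]

lemma mqcGenNonneg_subset_Ici (hbc : cbar Finv α ψ ≤ chalf Finv α) (hy : cbar Finv α ψ ≤ y) :
    mqcGenNonneg F Finv α ψ y ⊆ Ici 0 := by
  have := gInv_nonneg (F := F) hbc y
  unfold mqcGenNonneg
  split_ifs <;> intro x hx <;> simp only [mem_Ioo, mem_Ico, mem_Ici] at hx ⊢ <;> linarith

lemma mqcGenNonneg_subset_Ioi (hbc : cbar Finv α ψ ≤ chalf Finv α) (hy : chalf Finv α ≤ y) :
    mqcGenNonneg F Finv α ψ y ⊆ Ioi 0 := by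
  have := gInv_nonneg (F := F) hbc y
  unfold mqcGenNonneg
  split_ifs <;> intro x hx <;> simp only [mem_Ioo, mem_Ico, mem_Ioi] at hx ⊢ <;> linarith

lemma mqcGen_subset_Iic (hb : 0 < cbar Finv α ψ) (hbc : cbar Finv α ψ ≤ chalf Finv α)
    (hy : y ≤ -cbar Finv α ψ) : mqcGen F Finv α ψ y ⊆ Iic 0 := by
  rw [mqcGen, if_neg (by linarith)]
  intro x hx
  have := mqcGenNonneg_subset_Ici hbc (by linarith) hx
  rw [mem_Ici] at this
  exact mem_Iic.2 (by linarith)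

lemma notMem_mqcGenNonneg_of_gFun_le (hbc : cbar Finv α ψ ≤ chalf Finv α)
    (hct : chalf Finv α ≤ ctil F Finv α ψ)
    (hg : ∀ s, chalf Finv α - cbar Finv α ψ < s → s < gFun F Finv α ψ s)
    (ht : chalf Finv α - cbar Finv α ψ < t) (ht' : t ≤ cbar Finv α ψ + chalf Finv α)
    (hgy : gFun F Finv α ψ t ≤ y) (hy : ctil F Finv α ψ ≤ y) :
    t ∉ mqcGenNonneg F Finv α ψ y := by
  have : t ≤ gInv F Finv α ψ y :=
    le_csSup ⟨y, fun s hs => (hg s hs.1).le.trans hs.2⟩ ⟨ht, hgy⟩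
  unfold mqcGenNonneg
  split_ifs <;> intro hx <;> simp only [mem_Ioo, mem_Ico] at hx <;> linarith [hx.1]

lemma notMem_mqcGenNonneg_of_add_chalf_le
    (hct : ctil F Finv α ψ ≤ cbar Finv α ψ + 2 * chalf Finv α)
    (hg : gFun F Finv α ψ (cbar Finv α ψ + chalf Finv α)
      ≤ cbar Finv α ψ + 2 * chalf Finv α)
    (ht : cbar Finv α ψ + chalf Finv α < t) (hy : t + chalf Finv α ≤ y) :
    t ∉ mqcGenNonneg F Finv α ψ y := by
  unfold mqcGenNonneg
  split_ifs <;> intro hx <;> simp only [mem_Ioo, mem_Ico] at hx <;> linarith [hx.1]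

end Interval

structure Admissible (α ψ : ℝ) : Prop where
  α_pos : 0 < α
  α_lt : α < 1 / 4
  half_le_ψ : 1 / 2 ≤ ψ
  ψ_lt : ψ < 9 / 10

namespace Admissible

variable {α ψ : ℝ}

lemma Phi_neg_cbar (h : Admissible α ψ) : Phi (-cbar PhiInv α ψ) = ψ * α :=
  Phi_neg_PhiInv_one_sub (mul_pos (by linarith [h.half_le_ψ]) h.α_pos)
    (by nlinarith [h.α_pos, h.α_lt, h.ψ_lt, h.half_le_ψ])

lemma Phi_neg_chalf (h : Admissible α ψ) : Phi (-chalf PhiInv α) = α / 2 :=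
  Phi_neg_PhiInv_one_sub (by linarith [h.α_pos]) (by linarith [h.α_lt])

lemma Phi_neg_ctil (h : Admissible α ψ) : Phi (-ctil Phi PhiInv α ψ) = (1 - ψ) * α := by
  rw [ctil, h.Phi_neg_cbar, show 1 - α + ψ * α = 1 - (1 - ψ) * α by ring]
  exact Phi_neg_PhiInv_one_sub (mul_pos (by linarith [h.ψ_lt]) h.α_pos)
    (by nlinarith [h.α_pos, h.α_lt, h.ψ_lt, h.half_le_ψ])

lemma cbar_pos (h : Admissible α ψ) : 0 < cbar PhiInv α ψ := by
  rw [← neg_lt_neg_iff, neg_zero, ← strictMono_Phi.lt_iff_lt, h.Phi_neg_cbar, Phi_zero]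
  nlinarith [h.α_pos, h.α_lt, h.ψ_lt, h.half_le_ψ]

lemma cbar_le_chalf (h : Admissible α ψ) : cbar PhiInv α ψ ≤ chalf PhiInv α := by
  rw [← Phi_neg_le_Phi_neg_iff, h.Phi_neg_cbar, h.Phi_neg_chalf]
  nlinarith [h.α_pos, h.half_le_ψ]

lemma chalf_le_ctil (h : Admissible α ψ) : chalf PhiInv α ≤ ctil Phi PhiInv α ψ := by
  rw [← Phi_neg_le_Phi_neg_iff, h.Phi_neg_chalf, h.Phi_neg_ctil]
  nlinarith [h.α_pos, h.half_le_ψ]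

/-- Two applications of log-concavity give
`Φ(-c̄ - 2c) ≤ 2Φ(-2c)Φ(-c̄) ≤ 4Φ(-c)²Φ(-c̄) = ψα³ ≤ (1 - ψ)α = Φ(-c̃)`. -/
lemma ctil_le (h : Admissible α ψ) :
    ctil Phi PhiInv α ψ ≤ cbar PhiInv α ψ + 2 * chalf PhiInv α := by
  set b := cbar PhiInv α ψ
  set c := chalf PhiInv α
  have hb := h.cbar_pos
  have hc := hb.trans_le h.cbar_le_chalf
  have h2c : Phi (-(2 * c)) ≤ α ^ 2 / 2 := by
    have := Phi_mul_Phi_le (a := -(2 * c)) (b := 0) (u := -c) (by linarith) (by linarith)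
    rw [show -(2 * c) + 0 - -c = -c by ring, h.Phi_neg_chalf, Phi_zero] at this
    linarith
  have hb2c : Phi (-(b + 2 * c)) ≤ ψ * α ^ 3 := by
    have := Phi_mul_Phi_le (a := -(b + 2 * c)) (b := 0) (u := -(2 * c)) (by linarith) (by linarith)
    rw [show -(b + 2 * c) + 0 - -(2 * c) = -b by ring, h.Phi_neg_cbar, Phi_zero] at this
    nlinarith [mul_le_mul_of_nonneg_right h2c (mul_pos (by linarith [h.half_le_ψ]) h.α_pos).le]
  have hψα : ψ * α ^ 2 ≤ 1 - ψ := by nlinarith [h.α_pos, h.α_lt, h.ψ_lt, h.half_le_ψ]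
  rw [← Phi_neg_le_Phi_neg_iff, h.Phi_neg_ctil]
  nlinarith [mul_le_mul_of_nonneg_right hψα h.α_pos.le]

lemma Phi_neg_cbar_sub_le (h : Admissible α ψ) {t : ℝ}
    (ht : chalf PhiInv α - cbar PhiInv α ψ ≤ t) : Phi (-cbar PhiInv α ψ - t) ≤ α / 2 := by
  rw [← h.Phi_neg_chalf]
  exact strictMono_Phi.monotone (by linarith)

lemma Phi_gFun_sub (h : Admissible α ψ) {t : ℝ} (ht : chalf PhiInv α - cbar PhiInv α ψ ≤ t) :
    Phi (gFun Phi PhiInv α ψ t - t) = 1 - α + Phi (-cbar PhiInv α ψ - t) := by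
  rw [gFun, add_sub_cancel_left]
  exact Phi_PhiInv (by linarith [h.α_lt, Phi_pos (-cbar PhiInv α ψ - t)])
    (by linarith [h.α_pos, h.Phi_neg_cbar_sub_le ht])

lemma lt_gFun (h : Admissible α ψ) {t : ℝ} (ht : chalf PhiInv α - cbar PhiInv α ψ ≤ t) :
    t < gFun Phi PhiInv α ψ t := by
  rw [← sub_pos, ← strictMono_Phi.lt_iff_lt, h.Phi_gFun_sub ht, Phi_zero]
  linarith [h.α_lt, Phi_pos (-cbar PhiInv α ψ - t)]

lemma gFun_cbar_add_chalf_le (h : Admissible α ψ) :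
    gFun Phi PhiInv α ψ (cbar PhiInv α ψ + chalf PhiInv α)
      ≤ cbar PhiInv α ψ + 2 * chalf PhiInv α := by
  set b := cbar PhiInv α ψ
  set c := chalf PhiInv α
  have ht : c - b ≤ b + c := by linarith [h.cbar_pos]
  have hc : Phi c = 1 - α / 2 := by linarith [Phi_neg c, h.Phi_neg_chalf]
  have : Phi (gFun Phi PhiInv α ψ (b + c) - (b + c)) ≤ Phi c := by
    rw [h.Phi_gFun_sub ht, hc]
    linarith [h.Phi_neg_cbar_sub_le ht]
  linarith [strictMono_Phi.le_iff_le.1 this]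

lemma half_le_Phi_add_Phi (h : Admissible α ψ) {t : ℝ}
    (ht : chalf PhiInv α - cbar PhiInv α ψ ≤ t) :
    α / 2 ≤ Phi (-cbar PhiInv α ψ - t)
      + Phi (t - max (gFun Phi PhiInv α ψ t) (ctil Phi PhiInv α ψ)) := by
  set b := cbar PhiInv α ψ
  set ct := ctil Phi PhiInv α ψ
  have hw := Phi_pos (-b - t)
  rcases le_total ct (gFun Phi PhiInv α ψ t) with hg | hg
  · rw [max_eq_left hg, ← neg_sub (gFun Phi PhiInv α ψ t), Phi_neg, h.Phi_gFun_sub ht]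
    linarith [h.α_pos]
  rw [max_eq_right hg]
  rcases le_total (ct - t) b with hct | hct
  · have : Phi (-b) ≤ Phi (t - ct) := strictMono_Phi.monotone (by linarith)
    rw [h.Phi_neg_cbar] at this
    nlinarith [h.half_le_ψ, h.α_pos]
  have hlc := Phi_mul_Phi_le (a := -ct) (b := -b) (u := -b - t) (by linarith)
    (by linarith [h.cbar_le_chalf])
  rw [show -ct + -b - (-b - t) = t - ct by ring, h.Phi_neg_ctil, h.Phi_neg_cbar] at hlc
  have hψ : 1 / 16 ≤ (1 - ψ) * ψ := by nlinarith [h.half_le_ψ, h.ψ_lt]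
  have hprod : α ^ 2 / 16 ≤ Phi (-b - t) * Phi (t - ct) := by
    nlinarith [mul_le_mul_of_nonneg_right hψ (sq_nonneg α)]
  nlinarith [sq_nonneg (Phi (-b - t) - Phi (t - ct)), Phi_pos (t - ct), h.α_pos]

end Admissible

def signDeterminingMiss (α ψ θ : ℝ) : Set ℝ :=
  {y | cbar PhiInv α ψ ≤ |y| ∧ θ ∉ mqc α ψ y}

section SignDeterminingMiss

variable {α ψ θ y : ℝ}

lemma neg_signDeterminingMiss_neg (hb : 0 < cbar PhiInv α ψ) :
    -signDeterminingMiss α ψ (-θ) = signDeterminingMiss α ψ θ := by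
  ext y
  simp only [signDeterminingMiss, mem_neg, mem_ofPred_eq, abs_neg]
  refine and_congr_right fun hy => ?_
  rw [mqc, mqc, mqcGen_neg (abs_pos.1 (hb.trans_le hy)), mem_neg, neg_neg]

lemma mem_signDeterminingMiss_of_le (hb : 0 ≤ cbar PhiInv α ψ) (hy : cbar PhiInv α ψ ≤ y)
    (hθ : θ ∉ mqcGenNonneg Phi PhiInv α ψ y) : y ∈ signDeterminingMiss α ψ θ :=
  ⟨by rwa [abs_of_nonneg (hb.trans hy)], by rwa [mqc, mqcGen, if_pos (hb.trans hy)]⟩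

lemma Iic_neg_cbar_subset_signDeterminingMiss (hb : 0 < cbar PhiInv α ψ)
    (hbc : cbar PhiInv α ψ ≤ chalf PhiInv α) (hθ : 0 < θ) :
    Iic (-cbar PhiInv α ψ) ⊆ signDeterminingMiss α ψ θ := fun y (hy : y ≤ _) =>
  ⟨by rw [abs_of_neg (by linarith)]; linarith,
    fun hθy => not_le.2 hθ (mqcGen_subset_Iic hb hbc hy hθy)⟩

end SignDeterminingMiss

namespace Admissible

variable {α ψ θ : ℝ}

lemma ofReal_half_le_measure_of_zero (h : Admissible α ψ) :
    ENNReal.ofReal (α / 2) ≤ gaussianReal 0 1 (signDeterminingMiss α ψ 0) := by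
  have hb := h.cbar_pos
  calc ENNReal.ofReal (α / 2) = gaussianReal 0 1 (Ioi (chalf PhiInv α)) := by
        rw [gaussianReal_Ioi, zero_sub, h.Phi_neg_chalf]
    _ ≤ _ := measure_mono fun y (hy : _ < y) =>
        mem_signDeterminingMiss_of_le hb.le (h.cbar_le_chalf.trans hy.le) fun h0 =>
          lt_irrefl 0 (mem_Ioi.1 (mqcGenNonneg_subset_Ioi h.cbar_le_chalf hy.le h0))

lemma ofReal_half_le_measure_of_le_chalf_sub_cbar (h : Admissible α ψ) (hθ : 0 < θ)
    (hθ' : θ ≤ chalf PhiInv α - cbar PhiInv α ψ) :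
    ENNReal.ofReal (α / 2) ≤ gaussianReal θ 1 (signDeterminingMiss α ψ θ) := by
  calc ENNReal.ofReal (α / 2) ≤ gaussianReal θ 1 (Iic (-cbar PhiInv α ψ)) := by
        rw [gaussianReal_Iic, ← h.Phi_neg_chalf]
        exact ENNReal.ofReal_le_ofReal (strictMono_Phi.monotone (by linarith))
    _ ≤ _ := measure_mono (Iic_neg_cbar_subset_signDeterminingMiss h.cbar_pos h.cbar_le_chalf hθ)

lemma ofReal_half_le_measure_of_mem_Ioc (h : Admissible α ψ)
    (hθ : chalf PhiInv α - cbar PhiInv α ψ < θ)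
    (hθ' : θ ≤ cbar PhiInv α ψ + chalf PhiInv α) :
    ENNReal.ofReal (α / 2) ≤ gaussianReal θ 1 (signDeterminingMiss α ψ θ) := by
  have hb := h.cbar_pos
  have hbc := h.cbar_le_chalf
  set M := max (gFun Phi PhiInv α ψ θ) (ctil Phi PhiInv α ψ)
  have hM : ctil Phi PhiInv α ψ ≤ M := le_max_right _ _
  have hsub : Iic (-cbar PhiInv α ψ) ∪ Ioi M ⊆ signDeterminingMiss α ψ θ :=
    union_subset (Iic_neg_cbar_subset_signDeterminingMiss hb hbc (by linarith))
      fun y (hy : M < y) => mem_signDeterminingMiss_of_le hb.le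
        (by linarith [h.chalf_le_ctil])
        (notMem_mqcGenNonneg_of_gFun_le hbc h.chalf_le_ctil (fun _ hs => h.lt_gFun hs.le) hθ hθ'
          ((le_max_left _ _).trans hy.le) (hM.trans hy.le))
  calc ENNReal.ofReal (α / 2)
      ≤ ENNReal.ofReal (Phi (-cbar PhiInv α ψ - θ) + Phi (θ - M)) :=
        ENNReal.ofReal_le_ofReal (h.half_le_Phi_add_Phi hθ.le)
    _ = gaussianReal θ 1 (Iic (-cbar PhiInv α ψ) ∪ Ioi M) := by
        rw [measure_union (Iic_disjoint_Ioi (by linarith [h.chalf_le_ctil])) measurableSet_Ioi,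
          gaussianReal_Iic, gaussianReal_Ioi, ENNReal.ofReal_add (Phi_pos _).le (Phi_pos _).le]
    _ ≤ _ := measure_mono hsub

lemma ofReal_half_le_measure_of_cbar_add_chalf_lt (h : Admissible α ψ)
    (hθ : cbar PhiInv α ψ + chalf PhiInv α < θ) :
    ENNReal.ofReal (α / 2) ≤ gaussianReal θ 1 (signDeterminingMiss α ψ θ) := by
  have hb := h.cbar_pos
  calc ENNReal.ofReal (α / 2) = gaussianReal θ 1 (Ioi (θ + chalf PhiInv α)) := by
        rw [gaussianReal_Ioi, sub_add_cancel_left, h.Phi_neg_chalf]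
    _ ≤ _ := measure_mono fun y (hy : _ < y) =>
        mem_signDeterminingMiss_of_le hb.le (by linarith [h.cbar_le_chalf])
          (notMem_mqcGenNonneg_of_add_chalf_le h.ctil_le
            h.gFun_cbar_add_chalf_le hθ hy.le)

end Admissible

theorem mqc_sign_determining_noncoverage_lower_bound
    (α ψ θ : ℝ) (hα : 0 < α) (hα' : α < 0.25) (hψ : 1/2 ≤ ψ) (hψ' : ψ < 0.9) :
    ENNReal.ofReal (α / 2) ≤
      gaussianReal θ 1 {y : ℝ | cbar PhiInv α ψ ≤ |y| ∧ θ ∉ mqc α ψ y} := by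
  have h : Admissible α ψ :=
    ⟨hα, by norm_num at hα'; exact hα', hψ, by norm_num at hψ'; exact hψ'⟩
  change _ ≤ gaussianReal θ 1 (signDeterminingMiss α ψ θ)
  wlog hθ : 0 ≤ θ generalizing θ
  · rw [← neg_signDeterminingMiss_neg h.cbar_pos, gaussianReal_neg_apply]
    exact this (-θ) (by linarith)
  rcases hθ.eq_or_lt with rfl | hθ
  · exact h.ofReal_half_le_measure_of_zero
  rcases le_or_gt θ (chalf PhiInv α - cbar PhiInv α ψ) with h₁ | h₁
  · exact h.ofReal_half_le_measure_of_le_chalf_sub_cbar hθ h₁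
  rcases le_or_gt θ (cbar PhiInv α ψ + chalf PhiInv α) with h₂ | h₂
  · exact h.ofReal_half_le_measure_of_mem_Ioc h₁ h₂
  · exact h.ofReal_half_le_measure_of_cbar_add_chalf_lt h₂
end

section
/- Let Y_1, ..., Y_m be real random variables (with arbitrary joint distribution) such that each Y_i has density f(y − θ_i), let C(·;·) be a marginal confidence interval procedure for the density f, let q ∈ (0,1), and let S = S(Y) ⊆ {1,...,m} be any measurable selection rule. If for each i ∈ S the interval CI_i = C(Y_i; q/m) is constructed, then FCR ≤ q. -/
/-!
Whatever the selection, the number of non-covering intervals among the selected ones, divided by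
`max |S| 1`, is at most the total number of non-covering intervals `∑ i, 1[θ_i ∉ C(Y_i; q/m)]`.
Each summand has expectation at most `q/m` by marginal coverage, so linearity of expectation gives
`FCR ≤ m · q/m = q`, with no assumption on the joint law of the `Y_i`.
-/

open MeasureTheory Set

theorem card_filter_le_sum_indicator {Ω ι : Type*} [Fintype ι] (p : Ω → ι → Prop)
    (s : Finset ι) (ω : Ω) [DecidablePred (p ω)] :
    ((s.filter (p ω)).card : ℝ) ≤ ∑ i, {ω | p ω i}.indicator 1 ω := by
  calc ((s.filter (p ω)).card : ℝ) ≤ ((Finset.univ.filter (p ω)).card : ℝ) := by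
        gcongr
        exact Finset.subset_univ s
    _ = ∑ i, {ω | p ω i}.indicator 1 ω := by
        simp [Set.indicator_apply]

namespace MeasureTheory

variable {Ω : Type*} [MeasurableSpace Ω]

theorem prob_compl_le_ofReal_of_ofReal_one_sub_le (μ : Measure Ω) [IsProbabilityMeasure μ]
    {s : Set Ω} (hs : MeasurableSet s) {α : ℝ} (h : ENNReal.ofReal (1 - α) ≤ μ s) :
    μ sᶜ ≤ ENNReal.ofReal α := by
  have h_one : (1 : ENNReal) ≤ ENNReal.ofReal (1 - α) + ENNReal.ofReal α := by
    simpa using ENNReal.ofReal_add_le (p := 1 - α) (q := α)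
  rw [prob_compl_eq_one_sub hs, tsub_le_iff_right]
  exact h_one.trans (by rw [add_comm]; gcongr)

theorem integral_card_filter_div_max_le_sum_measureReal {ι : Type*} [Fintype ι]
    (P : Measure Ω) [IsFiniteMeasure P] (p : Ω → ι → Prop) [∀ ω, DecidablePred (p ω)]
    (hp : ∀ i, MeasurableSet {ω | p ω i}) (S : Ω → Finset ι) :
    ∫ ω, (((S ω).filter (p ω)).card : ℝ) / max ((S ω).card : ℝ) 1 ∂P ≤
      ∑ i, P.real {ω | p ω i} := by
  have h_int : ∀ i, Integrable ({ω | p ω i}.indicator 1) P := fun i =>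
    (integrable_const (1 : ℝ)).indicator (hp i)
  calc ∫ ω, (((S ω).filter (p ω)).card : ℝ) / max ((S ω).card : ℝ) 1 ∂P
      ≤ ∫ ω, ∑ i, {ω | p ω i}.indicator 1 ω ∂P := by
        refine integral_mono_of_nonneg (.of_forall fun ω => by positivity)
          (integrable_finsetSum _ fun i _ => h_int i) (.of_forall fun ω => ?_)
        exact (div_le_self (by positivity) (le_max_right _ _)).trans
          (card_filter_le_sum_indicator p (S ω) ω)
    _ = ∑ i, P.real {ω | p ω i} := by
        rw [integral_finsetSum _ fun i _ => h_int i]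
        exact Finset.sum_congr rfl fun i _ => integral_indicator_one (hp i)

end MeasureTheory

open Classical in
theorem bonferroni_adjusted_fcr_control_general
    {Ω : Type*} [MeasurableSpace Ω] (P : Measure Ω) [IsProbabilityMeasure P]
    (m : ℕ) (hm : 1 ≤ m) (q : ℝ) (hq : 0 < q) (hq1 : q < 1)
    (f : ℝ → ℝ)
    -- Y_1, ..., Y_m with arbitrary joint distribution, Y_i with density f(· − θ_i)
    (θ : Fin m → ℝ) (Y : Fin m → Ω → ℝ) (hY_meas : ∀ i, Measurable (Y i))
    (hY_law : ∀ i, P.map (Y i) =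
      volume.withDensity fun x => ENNReal.ofReal (f (x - θ i)))
    -- C is a measurable marginal confidence interval procedure for the density f
    (C : ℝ → ℝ → Set ℝ)
    (hC_meas : ∀ α t : ℝ, MeasurableSet {x : ℝ | t ∈ C x α})
    (hC_cov : ∀ α ∈ Set.Icc (0:ℝ) 1, ∀ t : ℝ,
      ENNReal.ofReal (1 - α) ≤
        (volume.withDensity fun x => ENNReal.ofReal (f (x - t))) {x : ℝ | t ∈ C x α})
    -- any measurable selection rule
    (S : Ω → Finset (Fin m)) :
    -- FCR of the Bonferroni-adjusted intervals CI_i = C(Y_i; q/m) is at most q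
    ∫ ω, (((S ω).filter fun i => θ i ∉ C (Y i ω) (q / m)).card : ℝ) /
        max ((S ω).card : ℝ) 1 ∂P ≤ q := by
  have hq_le_m : q ≤ m := hq1.le.trans (by exact_mod_cast hm)
  have hα : q / m ∈ Icc (0 : ℝ) 1 := ⟨by positivity, div_le_one_of_le₀ hq_le_m m.cast_nonneg⟩
  have h_meas : ∀ i, MeasurableSet {ω | θ i ∉ C (Y i ω) (q / m)} := fun i =>
    hY_meas i (hC_meas _ _).compl
  have h_miss : ∀ i, P.real {ω | θ i ∉ C (Y i ω) (q / m)} ≤ q / m := fun i => by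
    have : IsProbabilityMeasure (P.map (Y i)) :=
      Measure.isProbabilityMeasure_map (hY_meas i).aemeasurable
    have h_cov := hC_cov _ hα (θ i)
    rw [← hY_law i] at h_cov
    have h_noncov := prob_compl_le_ofReal_of_ofReal_one_sub_le _ (hC_meas _ _) h_cov
    rw [Measure.map_apply (hY_meas i) (hC_meas _ _).compl] at h_noncov
    exact ENNReal.toReal_le_of_le_ofReal hα.1 h_noncov
  refine (integral_card_filter_div_max_le_sum_measureReal P
    (fun ω i => θ i ∉ C (Y i ω) (q / m)) h_meas S).trans ?_
  calc ∑ i, P.real {ω | θ i ∉ C (Y i ω) (q / m)}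
    _ ≤ ∑ _i : Fin m, q / m := Finset.sum_le_sum fun i _ => h_miss i
    _ = q := by simp [field]

open Classical in
theorem bonferroni_adjusted_fcr_control
    {Ω : Type*} [MeasurableSpace Ω] (P : Measure Ω) [IsProbabilityMeasure P]
    (m : ℕ) (hm : 1 ≤ m) (q : ℝ) (hq : 0 < q) (hq1 : q < 1)
    -- f is a Borel probability density on ℝ
    (f : ℝ → ℝ) (hf_meas : Measurable f) (hf_nonneg : ∀ x, 0 ≤ f x)
    (hf_prob : IsProbabilityMeasure (volume.withDensity fun x => ENNReal.ofReal (f x)))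
    -- Y_1, ..., Y_m with arbitrary joint distribution, Y_i with density f(· − θ_i)
    (θ : Fin m → ℝ) (Y : Fin m → Ω → ℝ) (hY_meas : ∀ i, Measurable (Y i))
    (hY_law : ∀ i, P.map (Y i) =
      volume.withDensity fun x => ENNReal.ofReal (f (x - θ i)))
    -- C is a measurable marginal confidence interval procedure for the density f
    (C : ℝ → ℝ → Set ℝ)
    (hC_meas : ∀ α t : ℝ, MeasurableSet {x : ℝ | t ∈ C x α})
    (hC_cov : ∀ α ∈ Set.Icc (0:ℝ) 1, ∀ t : ℝ,
      ENNReal.ofReal (1 - α) ≤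
        (volume.withDensity fun x => ENNReal.ofReal (f (x - t))) {x : ℝ | t ∈ C x α})
    -- any measurable selection rule
    (S : Ω → Finset (Fin m)) (hS_meas : ∀ i, MeasurableSet {ω | i ∈ S ω}) :
    -- FCR of the Bonferroni-adjusted intervals CI_i = C(Y_i; q/m) is at most q
    ∫ ω, (((S ω).filter fun i => θ i ∉ C (Y i ω) (q / m)).card : ℝ) /
        max ((S ω).card : ℝ) 1 ∂P ≤ q :=
  bonferroni_adjusted_fcr_control_general P m hm q hq hq1 f θ Y hY_meas hY_law C hC_meas hC_cov S
end
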